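/- arXiv:1011.0318 — 7 statements merged into one kernel-verified Lean document; each statement's English description precedes it below -/
import Mathlib

section
/- Let D be a chord diagram and fix a gap g. Define the greedy partition starting at g: place the first cut at g, and repeatedly place the next cut as far forward as possible so that the arc just created is properly embedded (contains both endpoints of no chord), stopping upon returning to or passing g. Then there exists a gap g such that the greedy partition starting at g is a minimal cut set, realizing the arc number of D. -/
/-- Gap `g` (between points `g` and `g+1`) lies in the forward interval of gaps
from point `a` to point `b`, i.e. `g ∈ {a, a+1, ..., b-1}`. -/
def gapIn {N : ℕ} (a b g : ZMod N) : Prop := (g - a).val < (b - a).val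

/-- Point `p` lies in the arc of points strictly after gap `g` up to gap `g'`,
i.e. `p ∈ {g+1, ..., g'}`. -/
def pointIn {N : ℕ} (g g' p : ZMod N) : Prop := (p - g - 1).val < (g' - g).val

/-- `X` is the chord set of a chord diagram on the `2n` points `ZMod (2n)`:
`n` chords, each with two points, pairwise disjoint (hence a perfect matching). -/
def IsDiagram (n : ℕ) (X : Finset (Finset (ZMod (2 * n)))) : Prop :=
  X.card = n ∧ (∀ c ∈ X, c.card = 2) ∧
    ∀ c ∈ X, ∀ c' ∈ X, c ≠ c' → Disjoint c c'

/-- A cut set: a nonempty set of gaps such that every chord is separated on both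
sides, i.e. no arc between consecutive cuts contains both endpoints of a chord. -/
def IsCutSet (n : ℕ) (X : Finset (Finset (ZMod (2 * n)))) (S : Finset (ZMod (2 * n))) : Prop :=
  S.Nonempty ∧ ∀ c ∈ X, ∀ a ∈ c, ∀ b ∈ c, a ≠ b → ∃ g ∈ S, gapIn a b g

/-- The arc number: minimal cardinality of a cut set. -/
noncomputable def arcNumber (n : ℕ) (X : Finset (Finset (ZMod (2 * n)))) : ℕ :=
  sInf {k | ∃ S, IsCutSet n X S ∧ S.card = k}

/-- The arc of points from gap `g` to gap `g'` is properly embedded: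
it contains both endpoints of no chord. -/
def ProperArc (n : ℕ) (X : Finset (Finset (ZMod (2 * n)))) (g g' : ZMod (2 * n)) : Prop :=
  ∀ c ∈ X, ∃ p ∈ c, ¬ pointIn g g' p

/-- The arc from gap `g` to gap `g'` is front-maximal (an f-arc): properly embedded,
but extending its front end past the next point makes it contain both endpoints of
some chord. -/
def FrontMax (n : ℕ) (X : Finset (Finset (ZMod (2 * n)))) (g g' : ZMod (2 * n)) : Prop :=
  ProperArc n X g g' ∧ ¬ ProperArc n X g (g' + 1)

open scoped Classical in
/-- The greedy step: from gap `g`, the next cut is placed as far forward as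
possible so that the created arc is properly embedded. -/
noncomputable def nextGreedy (n : ℕ) (X : Finset (Finset (ZMod (2 * n))))
    (g : ZMod (2 * n)) : ZMod (2 * n) :=
  g + ((Nat.findGreatest (fun d => ProperArc n X g (g + (d : ZMod (2 * n)))) (2 * n - 1) : ℕ) :
    ZMod (2 * n))

/-- The `k`-th cut of the greedy partition starting at `g`. -/
noncomputable def greedyIter (n : ℕ) (X : Finset (Finset (ZMod (2 * n))))
    (g : ZMod (2 * n)) (k : ℕ) : ZMod (2 * n) :=
  (nextGreedy n X)^[k] g

/-- Total number of points traversed by the first `k` greedy arcs. -/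
noncomputable def greedyLen (n : ℕ) (X : Finset (Finset (ZMod (2 * n))))
    (g : ZMod (2 * n)) : ℕ → ℕ
  | 0 => 0
  | k + 1 => greedyLen n X g k +
      (nextGreedy n X (greedyIter n X g k) - greedyIter n X g k).val



lemma zsub_val {N : ℕ} (hN : 0 < N) (x y : ZMod N) :
    (x - y).val = if y.val ≤ x.val then x.val - y.val else x.val + N - y.val := by
  haveI : NeZero N := ⟨by omega⟩
  have hx := ZMod.val_lt x
  have hy := ZMod.val_lt y
  have hcx : ((x.val : ℕ) : ZMod N) = x := by simp [ZMod.natCast_val, ZMod.cast_id]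
  have hcy : ((y.val : ℕ) : ZMod N) = y := by simp [ZMod.natCast_val, ZMod.cast_id]
  split_ifs with h
  · have : x - y = ((x.val - y.val : ℕ) : ZMod N) := by
      rw [Nat.cast_sub h, hcx, hcy]
    rw [this, ZMod.val_natCast_of_lt (by omega)]
  · have : x - y = ((x.val + N - y.val : ℕ) : ZMod N) := by
      rw [Nat.cast_sub (by omega), Nat.cast_add, hcx, hcy, ZMod.natCast_self, add_zero]
    rw [this, ZMod.val_natCast_of_lt (by omega)]

lemma pos_sub {N : ℕ} (hN : 0 < N) (g x y : ZMod N) :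
    (x - y).val = if (y-g).val ≤ (x-g).val then (x-g).val - (y-g).val
      else (x-g).val + N - (y-g).val := by
  have h := zsub_val hN (x - g) (y - g)
  rwa [sub_sub_sub_cancel_right] at h

lemma val_sub_one {N : ℕ} (hN : 1 < N) (x : ZMod N) :
    (x - 1).val = if 1 ≤ x.val then x.val - 1 else x.val + N - 1 := by
  have h := zsub_val (by omega) x 1
  rwa [ZMod.val_one_eq_one_mod, Nat.mod_eq_of_lt hN] at h

open scoped Classical in
noncomputable def gstep (n : ℕ) (X : Finset (Finset (ZMod (2 * n))))
    (g : ZMod (2 * n)) : ℕ :=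
  Nat.findGreatest (fun d => ProperArc n X g (g + (d : ZMod (2 * n)))) (2 * n - 1)

lemma nextGreedy_eq (n : ℕ) (X : Finset (Finset (ZMod (2 * n)))) (g : ZMod (2*n)) :
    nextGreedy n X g = g + ((gstep n X g : ℕ) : ZMod (2*n)) := rfl

section basic
variable {n : ℕ} {X : Finset (Finset (ZMod (2 * n)))}

lemma properArc_one (hn : 0 < n) (hc2 : ∀ c ∈ X, c.card = 2) (g : ZMod (2*n)) :
    ProperArc n X g (g + ((1:ℕ) : ZMod (2*n))) := by
  intro c hc
  obtain ⟨x, y, hxy, rfl⟩ := Finset.card_eq_two.1 (hc2 c hc)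
  have hval : ((g + 1) - g : ZMod (2*n)).val = 1 := by
    rw [add_sub_cancel_left, ZMod.val_one_eq_one_mod, Nat.mod_eq_of_lt (by omega)]
  by_cases hx : x = g + 1
  · refine ⟨y, by simp, ?_⟩
    simp only [pointIn, Nat.cast_one, hval]
    intro hlt
    have h0 : (y - g - 1 : ZMod (2*n)).val = 0 := by omega
    have : y - g - 1 = 0 := by
      haveI : NeZero (2*n) := ⟨by omega⟩
      exact (ZMod.val_eq_zero _).1 h0
    have : y = g + 1 := by linear_combination this
    exact hxy (hx.trans this.symm)
  · refine ⟨x, by simp, ?_⟩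
    simp only [pointIn, Nat.cast_one, hval]
    intro hlt
    have h0 : (x - g - 1 : ZMod (2*n)).val = 0 := by omega
    have : x - g - 1 = 0 := by
      haveI : NeZero (2*n) := ⟨by omega⟩
      exact (ZMod.val_eq_zero _).1 h0
    exact hx (by linear_combination this)

lemma gstep_pos (hn : 0 < n) (hc2 : ∀ c ∈ X, c.card = 2) (g : ZMod (2*n)) :
    1 ≤ gstep n X g := by
  classical
  exact Nat.le_findGreatest (by omega) (properArc_one hn hc2 g)

lemma gstep_le (g : ZMod (2*n)) : gstep n X g ≤ 2*n - 1 := by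
  classical
  exact Nat.findGreatest_le _

lemma gstep_proper (hn : 0 < n) (hc2 : ∀ c ∈ X, c.card = 2) (g : ZMod (2*n)) :
    ProperArc n X g (g + ((gstep n X g : ℕ) : ZMod (2*n))) := by
  classical
  exact Nat.findGreatest_spec (P := fun d => ProperArc n X g (g + (d : ZMod (2*n))))
    (m := 1) (n := 2*n-1) (by omega) (properArc_one hn hc2 g)

lemma gstep_ge (hn : 0 < n) (g : ZMod (2*n)) (d : ℕ) (hd : d ≤ 2*n - 1)
    (hp : ProperArc n X g (g + ((d:ℕ) : ZMod (2*n)))) : d ≤ gstep n X g := by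
  classical
  exact Nat.le_findGreatest hd hp

lemma greedyLen_succ (hn : 0 < n) (g : ZMod (2*n)) (k : ℕ) :
    greedyLen n X g (k+1) = greedyLen n X g k + gstep n X (greedyIter n X g k) := by
  show greedyLen n X g k + _ = _
  rw [nextGreedy_eq, add_sub_cancel_left,
    ZMod.val_natCast_of_lt (by have := gstep_le (n := n) (X := X) (greedyIter n X g k); omega)]

lemma greedyIter_eq (hn : 0 < n) (g : ZMod (2*n)) (k : ℕ) :
    greedyIter n X g k = g + ((greedyLen n X g k : ℕ) : ZMod (2*n)) := by
  induction k with
  | zero => simp [greedyIter, greedyLen]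
  | succ k ih =>
    have : greedyIter n X g (k+1) = nextGreedy n X (greedyIter n X g k) :=
      Function.iterate_succ_apply' _ _ _
    rw [this, nextGreedy_eq, greedyLen_succ hn, Nat.cast_add, ← add_assoc, ← ih]

lemma greedyLen_strictMono (hn : 0 < n) (hc2 : ∀ c ∈ X, c.card = 2) (g : ZMod (2*n)) :
    StrictMono (greedyLen n X g) := by
  apply strictMono_nat_of_lt_succ
  intro k
  rw [greedyLen_succ hn]
  have := gstep_pos hn hc2 (greedyIter n X g k)
  omega

lemma greedy_cutset (hn : 0 < n) (hc2 : ∀ c ∈ X, c.card = 2) (g : ZMod (2*n))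
    (K : ℕ) (hK0 : 0 < K) (hKlt : ∀ k < K, greedyLen n X g k < 2*n)
    (hKge : 2*n ≤ greedyLen n X g K) :
    IsCutSet n X ((Finset.range K).image (greedyIter n X g)) := by
  haveI : NeZero (2*n) := ⟨by omega⟩
  have hN : 0 < 2*n := by omega
  constructor
  · exact ⟨greedyIter n X g 0, Finset.mem_image.2 ⟨0, Finset.mem_range.2 hK0, rfl⟩⟩
  intro c hc a ha b hb hab
  set s := greedyLen n X g with hs
  set A := (a - g).val with hA
  set B := (b - g).val with hB
  set L := (b - a).val with hL
  have hAlt : A < 2*n := ZMod.val_lt _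
  have hBlt : B < 2*n := ZMod.val_lt _
  have hL1 : 1 ≤ L := by
    have : b - a ≠ 0 := sub_ne_zero.2 (Ne.symm hab)
    have := (ZMod.val_eq_zero (b - a)).not.2 this
    omega
  have hLrel : L = if A ≤ B then B - A else B + 2*n - A := pos_sub hN g b a
  have hgap : ∀ k, k < K →
      (greedyIter n X g k - a).val = if A ≤ s k then s k - A else s k + 2*n - A := by
    intro k hk
    have h1 : (greedyIter n X g k - g).val = s k := by
      rw [greedyIter_eq hn, add_sub_cancel_left, ZMod.val_natCast_of_lt (hKlt k hk)]
    have h2 := pos_sub hN g (greedyIter n X g k) a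
    rw [h1, ← hA] at h2
    exact h2
  have hmem : ∀ k, k < K → greedyIter n X g k ∈ (Finset.range K).image (greedyIter n X g) :=
    fun k hk => Finset.mem_image.2 ⟨k, Finset.mem_range.2 hk, rfl⟩
  -- the index j
  classical
  set j := Nat.findGreatest (fun j => s j ≤ A) (K - 1) with hjdef
  have hs0 : s 0 = 0 := rfl
  have hj1 : s j ≤ A :=
    Nat.findGreatest_spec (P := fun i => s i ≤ A) (m := 0) (Nat.zero_le _) (by omega)
  have hjK : j < K := lt_of_le_of_lt (Nat.findGreatest_le _) (by omega)
  have hj2 : A < s (j+1) := by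
    by_cases hc' : j + 1 ≤ K - 1
    · by_contra h
      push_neg at h
      exact Nat.findGreatest_is_greatest (P := fun i => s i ≤ A) (hjdef ▸ lt_add_one j) hc' h
    · have : j + 1 = K := by omega
      rw [this]; omega
  by_cases hcase1 : s j = A
  · exact ⟨greedyIter n X g j, hmem j hjK, by
      simp only [gapIn, hgap j hjK, ← hcase1, le_refl, if_pos]; omega⟩
  have hjA : s j < A := by omega
  by_cases hcase2 : 2*n < A + L
  · refine ⟨greedyIter n X g 0, hmem 0 hK0, ?_⟩
    have h0 : s 0 = 0 := rfl
    simp only [gapIn, hgap 0 hK0, h0]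
    split_ifs <;> omega
  by_cases hcase3 : s (j+1) < A + L
  · have hjK' : j + 1 < K := by
      rcases Nat.lt_or_ge (j+1) K with h | h
      · exact h
      · exfalso
        have h3 : s K ≤ s (j+1) := (greedyLen_strictMono hn hc2 g).le_iff_le.2 h
        omega
    refine ⟨greedyIter n X g (j+1), hmem (j+1) hjK', ?_⟩
    simp only [gapIn, hgap (j+1) hjK']
    split_ifs <;> omega
  -- contradiction case
  exfalso
  set gj := greedyIter n X g j with hgj
  set d := gstep n X gj with hd
  have hdval : s (j+1) = s j + d := greedyLen_succ hn g j
  have hd2n : d ≤ 2*n - 1 := gstep_le gj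
  have hproper := gstep_proper hn hc2 gj
  obtain ⟨p, hp, hnp⟩ := hproper c hc
  have hcab : ({a, b} : Finset (ZMod (2*n))) = c := by
    apply Finset.eq_of_subset_of_card_le
    · intro x hx
      rcases Finset.mem_insert.1 hx with rfl | hx
      · exact ha
      · rcases Finset.mem_singleton.1 hx with rfl
        exact hb
    · rw [hc2 c hc, Finset.card_insert_of_notMem (by simpa using hab),
        Finset.card_singleton]
  have hpab : p = a ∨ p = b := by
    rw [← hcab] at hp
    simpa using hp
  have hposj : (gj - g).val = s j := by
    rw [hgj, greedyIter_eq hn, add_sub_cancel_left, ZMod.val_natCast_of_lt (hKlt j hjK)]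
  have hrhs : (gj + ((d:ℕ) : ZMod (2*n)) - gj).val = d := by
    rw [add_sub_cancel_left, ZMod.val_natCast_of_lt (by omega)]
  have hptIn : ∀ q : ZMod (2*n), q = a ∨ q = b → pointIn gj (gj + ((d:ℕ) : ZMod (2*n))) q := by
    intro q hq
    have hq1 : (q - gj).val = if s j ≤ (q - g).val then (q - g).val - s j
        else (q - g).val + 2*n - s j := by
      have h2 := pos_sub hN g q gj
      rwa [hposj] at h2
    have hqval : (q - g).val = A ∨ (q - g).val = B := by
      rcases hq with rfl | rfl
      · exact Or.inl rfl
      · exact Or.inr rfl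
    show (q - gj - 1).val < _
    rw [hrhs, val_sub_one (by omega), hq1]
    rcases hqval with h | h <;> rw [h] <;> split_ifs at hLrel ⊢ <;> omega
  rcases hpab with rfl | rfl
  · exact hnp (hptIn p (Or.inl rfl))
  · exact hnp (hptIn p (Or.inr rfl))

lemma pos_inj {N : ℕ} (hN : 0 < N) (g x y : ZMod N)
    (h : (x - g).val = (y - g).val) : x = y := by
  haveI : NeZero N := ⟨by omega⟩
  have h2 : x - g = y - g := ZMod.val_injective N h
  have := congrArg (· + g) h2
  simpa using this

lemma cuts_arith {n sk e α β τ1 τ2 L L' : ℕ}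
    (hαlt : α < 2*n) (hβlt : β < 2*n) (hτ1lt : τ1 < 2*n) (hτ2lt : τ2 < 2*n)
    (hαβ : α ≠ β) (he2 : sk + e ≤ 2*n)
    (Ga : (α = 0 ∧ sk + e = 2*n) ∨ (sk < α ∧ α ≤ sk + e))
    (Gb : (β = 0 ∧ sk + e = 2*n) ∨ (sk < β ∧ β ≤ sk + e))
    (h1 : τ1 ≤ sk ∨ sk + e ≤ τ1) (h2 : τ2 ≤ sk ∨ sk + e ≤ τ2)
    (eL : L = if α ≤ β then β - α else β + 2*n - α)
    (eL' : L' = if β ≤ α then α - β else α + 2*n - β)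
    (e1 : (if α ≤ τ1 then τ1 - α else τ1 + 2*n - α) < L)
    (e2 : (if β ≤ τ2 then τ2 - β else τ2 + 2*n - β) < L') : False := by
  rcases Ga with Ga | Ga <;> rcases Gb with Gb | Gb <;>
    split_ifs at eL eL' e1 e2 <;> omega

set_option maxHeartbeats 2000000 in
lemma proper_of_cuts (hn : 0 < n) (hc2 : ∀ c ∈ X, c.card = 2)
    (T : Finset (ZMod (2*n))) (hT : IsCutSet n X T) (g gk : ZMod (2*n)) (sk e : ℕ)
    (hsk : (gk - g).val = sk) (he1 : 1 ≤ e) (he2 : sk + e ≤ 2*n) (he3 : e < 2*n)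
    (hcut : ∀ t ∈ T, (t - g).val ≤ sk ∨ sk + e ≤ (t - g).val) :
    ProperArc n X gk (gk + ((e:ℕ) : ZMod (2*n))) := by
  haveI : NeZero (2*n) := ⟨by omega⟩
  have hN : 0 < 2*n := by omega
  intro c hc
  by_contra hcon
  push_neg at hcon
  obtain ⟨a, b, hab, rfl⟩ := Finset.card_eq_two.1 (hc2 _ hc)
  have ha : pointIn gk (gk + ((e:ℕ) : ZMod (2*n))) a := hcon a (Finset.mem_insert_self _ _)
  have hb : pointIn gk (gk + ((e:ℕ) : ZMod (2*n))) b := hcon b (by simp)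
  have hre : (gk + ((e:ℕ) : ZMod (2*n)) - gk).val = e := by
    rw [add_sub_cancel_left, ZMod.val_natCast_of_lt he3]
  have Fa : (a - gk - 1).val < e := by rw [← hre]; exact ha
  have Fb : (b - gk - 1).val < e := by rw [← hre]; exact hb
  set α := (a - g).val with hα'
  set β := (b - g).val with hβ'
  have hαlt : α < 2*n := ZMod.val_lt _
  have hβlt : β < 2*n := ZMod.val_lt _
  have hαβ : α ≠ β := fun h => hab (pos_inj hN g a b h)
  have hα : (a - gk).val = if sk ≤ α then α - sk else α + 2*n - sk := by
    have := pos_sub hN g a gk; rwa [hsk] at this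
  have hβ : (b - gk).val = if sk ≤ β then β - sk else β + 2*n - sk := by
    have := pos_sub hN g b gk; rwa [hsk] at this
  have Fa' : (a - gk - 1).val = if 1 ≤ (a - gk).val then (a - gk).val - 1
      else (a - gk).val + 2*n - 1 := val_sub_one (by omega) _
  have Fb' : (b - gk - 1).val = if 1 ≤ (b - gk).val then (b - gk).val - 1
      else (b - gk).val + 2*n - 1 := val_sub_one (by omega) _
  obtain ⟨t1, ht1, hg1⟩ := hT.2 _ hc a (by simp) b (by simp) hab
  obtain ⟨t2, ht2, hg2⟩ := hT.2 _ hc b (by simp) a (by simp) hab.symm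
  set τ1 := (t1 - g).val with hτ1'
  set τ2 := (t2 - g).val with hτ2'
  have hτ1lt : τ1 < 2*n := ZMod.val_lt _
  have hτ2lt : τ2 < 2*n := ZMod.val_lt _
  have e1 : (t1 - a).val = if α ≤ τ1 then τ1 - α else τ1 + 2*n - α := pos_sub hN g t1 a
  have e2 : (t2 - b).val = if β ≤ τ2 then τ2 - β else τ2 + 2*n - β := pos_sub hN g t2 b
  have eL : (b - a).val = if α ≤ β then β - α else β + 2*n - α := pos_sub hN g b a
  have eL' : (a - b).val = if β ≤ α then α - β else α + 2*n - β := pos_sub hN g a b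
  have hg1' : (t1 - a).val < (b - a).val := hg1
  have hg2' : (t2 - b).val < (a - b).val := hg2
  have hsklt : sk < 2*n := by omega
  have Ga : (α = 0 ∧ sk + e = 2*n) ∨ (sk < α ∧ α ≤ sk + e) := by
    split_ifs at hα Fa' <;> omega
  have Gb : (β = 0 ∧ sk + e = 2*n) ∨ (sk < β ∧ β ≤ sk + e) := by
    split_ifs at hβ Fb' <;> omega
  exact cuts_arith hαlt hβlt hτ1lt hτ2lt hαβ he2 Ga Gb (hcut t1 ht1) (hcut t2 ht2)
    eL eL' (e1 ▸ hg1') (e2 ▸ hg2')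

lemma cutset_reach (hn : 0 < n) (hc2 : ∀ c ∈ X, c.card = 2) (hne : X.Nonempty)
    (T : Finset (ZMod (2*n))) (hT : IsCutSet n X T) (g : ZMod (2*n)) (hg : g ∈ T) :
    ∀ k, 2*n ≤ greedyLen n X g k ∨
      k + 1 ≤ (T.filter (fun t => (t - g).val ≤ greedyLen n X g k)).card := by
  haveI : NeZero (2*n) := ⟨by omega⟩
  have hN : 0 < 2*n := by omega
  intro k
  induction k with
  | zero =>
    right
    have hmem : g ∈ T.filter (fun t => (t - g).val ≤ greedyLen n X g 0) := by
      refine Finset.mem_filter.2 ⟨hg, ?_⟩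
      simp [sub_self]
    exact Finset.card_pos.2 ⟨g, hmem⟩
  | succ k ih =>
    have hmono : greedyLen n X g k ≤ greedyLen n X g (k+1) :=
      (greedyLen_strictMono hn hc2 g).monotone (Nat.le_succ k)
    rcases ih with ih | ih
    · left; omega
    by_cases hsk : 2*n ≤ greedyLen n X g k
    · left; omega
    push_neg at hsk
    set sk := greedyLen n X g k with hskdef
    have hposk : (greedyIter n X g k - g).val = sk := by
      rw [greedyIter_eq hn, add_sub_cancel_left, ZMod.val_natCast_of_lt hsk]
    have hsucc : greedyLen n X g (k+1) = sk + gstep n X (greedyIter n X g k) :=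
      greedyLen_succ hn g k
    have hdle : gstep n X (greedyIter n X g k) ≤ 2*n - 1 := gstep_le _
    by_cases hall : ∀ t ∈ T, (t - g).val ≤ sk
    · by_cases hsk0 : sk = 0
      · exfalso
        obtain ⟨c, hc⟩ := hne
        obtain ⟨a, b, hab, rfl⟩ := Finset.card_eq_two.1 (hc2 _ hc)
        obtain ⟨t1, ht1, hg1⟩ := hT.2 _ hc a (by simp) b (by simp) hab
        obtain ⟨t2, ht2, hg2⟩ := hT.2 _ hc b (by simp) a (by simp) hab.symm
        have h1 : (t1 - g).val = 0 := by have := hall t1 ht1; omega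
        have h2 : (t2 - g).val = 0 := by have := hall t2 ht2; omega
        set α := (a - g).val with hα'
        set β := (b - g).val with hβ'
        have hαlt : α < 2*n := ZMod.val_lt _
        have hβlt : β < 2*n := ZMod.val_lt _
        have hαβ : α ≠ β := fun h => hab (pos_inj hN g a b h)
        have e1 : (t1 - a).val = if α ≤ (t1 - g).val then (t1 - g).val - α
            else (t1 - g).val + 2*n - α := pos_sub hN g t1 a
        have e2 : (t2 - b).val = if β ≤ (t2 - g).val then (t2 - g).val - β
            else (t2 - g).val + 2*n - β := pos_sub hN g t2 b
        have eL : (b - a).val = if α ≤ β then β - α else β + 2*n - α := pos_sub hN g b a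
        have eL' : (a - b).val = if β ≤ α then α - β else α + 2*n - β := pos_sub hN g a b
        have hg1' : (t1 - a).val < (b - a).val := hg1
        have hg2' : (t2 - b).val < (a - b).val := hg2
        rw [h1] at e1
        rw [h2] at e2
        split_ifs at e1 e2 eL eL' <;> omega
      · left
        have hp := proper_of_cuts hn hc2 T hT g (greedyIter n X g k) sk (2*n - sk)
          hposk (by omega) (by omega) (by omega) (fun t ht => Or.inl (hall t ht))
        have := gstep_ge hn (greedyIter n X g k) (2*n - sk) (by omega) hp
        omega
    · push_neg at hall
      obtain ⟨t0, ht0, ht0v⟩ := hall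
      obtain ⟨t1, ht1mem, ht1min⟩ := Finset.exists_min_image
        (T.filter fun t => sk < (t - g).val) (fun t => (t - g).val)
        ⟨t0, Finset.mem_filter.2 ⟨ht0, ht0v⟩⟩
      set p := (t1 - g).val with hpdef
      have hpgt : sk < p := (Finset.mem_filter.1 ht1mem).2
      have hplt : p < 2*n := ZMod.val_lt _
      have hmin : ∀ t ∈ T, (t - g).val ≤ sk ∨ sk + (p - sk) ≤ (t - g).val := by
        intro t ht
        by_cases h : (t - g).val ≤ sk
        · exact Or.inl h
        · refine Or.inr ?_
          have := ht1min t (Finset.mem_filter.2 ⟨ht, by omega⟩)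
          omega
      have hp2 := proper_of_cuts hn hc2 T hT g (greedyIter n X g k) sk (p - sk)
        hposk (by omega) (by omega) (by omega) hmin
      have hstep := gstep_ge hn (greedyIter n X g k) (p - sk) (by omega) hp2
      right
      have hsub : T.filter (fun t => (t - g).val ≤ sk)
          ⊆ T.filter (fun t => (t - g).val ≤ greedyLen n X g (k+1)) :=
        Finset.monotone_filter_right T (fun t ht => by omega)
      have ht1new : t1 ∈ T.filter (fun t => (t - g).val ≤ greedyLen n X g (k+1)) :=
        Finset.mem_filter.2 ⟨(Finset.mem_filter.1 ht1mem).1, by omega⟩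
      have ht1old : t1 ∉ T.filter (fun t => (t - g).val ≤ sk) := by
        intro h
        have := (Finset.mem_filter.1 h).2
        omega
      have hlt : (T.filter (fun t => (t - g).val ≤ sk)).card
          < (T.filter (fun t => (t - g).val ≤ greedyLen n X g (k+1))).card :=
        Finset.card_lt_card ((Finset.ssubset_iff_of_subset hsub).2 ⟨t1, ht1new, ht1old⟩)
      omega

/-- There is a gap `g` such that the greedy partition starting at `g` (with cuts
`g, nextGreedy g, ...`, stopping at the first index `K` at which the cuts have
returned to or passed `g`) is a minimal cut set, realizing the arc number. -/
theorem stmt_5 (n : ℕ) (X : Finset (Finset (ZMod (2 * n))))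
    (hD : IsDiagram n X) (hne : X.Nonempty) :
    ∃ (g : ZMod (2 * n)) (K : ℕ), 0 < K ∧
      (∀ k < K, greedyLen n X g k < 2 * n) ∧ 2 * n ≤ greedyLen n X g K ∧
      IsCutSet n X ((Finset.range K).image (greedyIter n X g)) ∧
      ((Finset.range K).image (greedyIter n X g)).card = arcNumber n X := by
  have hn : 0 < n := by
    obtain ⟨c, hc⟩ := hne
    have h1 := hD.1
    have hpos : 0 < X.card := Finset.card_pos.2 ⟨c, hc⟩
    omega
  haveI : NeZero (2*n) := ⟨by omega⟩
  have hc2 := hD.2.1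
  have huniv : IsCutSet n X Finset.univ := by
    constructor
    · exact ⟨0, Finset.mem_univ 0⟩
    · intro c hc a ha b hb hab
      refine ⟨a, Finset.mem_univ a, ?_⟩
      show (a - a).val < (b - a).val
      rw [sub_self, ZMod.val_zero]
      have h0 : b - a ≠ 0 := sub_ne_zero.2 (Ne.symm hab)
      have := (ZMod.val_eq_zero (b-a)).not.2 h0
      omega
  have hSne : {k | ∃ S, IsCutSet n X S ∧ S.card = k}.Nonempty :=
    ⟨Finset.univ.card, Finset.univ, huniv, rfl⟩
  obtain ⟨T, hT, hTcard⟩ :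
      ∃ S, IsCutSet n X S ∧ S.card = arcNumber n X := Nat.sInf_mem hSne
  obtain ⟨g, hg⟩ := hT.1
  have hreach : 2*n ≤ greedyLen n X g T.card := by
    rcases cutset_reach hn hc2 hne T hT g hg T.card with h | h
    · exact h
    · have := Finset.card_filter_le T (fun t => (t - g).val ≤ greedyLen n X g T.card)
      omega
  have hex : ∃ k, 2*n ≤ greedyLen n X g k := ⟨T.card, hreach⟩
  have hKspec : 2*n ≤ greedyLen n X g (Nat.find hex) := Nat.find_spec hex
  have hKmin : ∀ k < Nat.find hex, greedyLen n X g k < 2*n := fun k hk => by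
    have := Nat.find_min hex hk; omega
  have hK0 : 0 < Nat.find hex := by
    rcases Nat.eq_zero_or_pos (Nat.find hex) with h | h
    · exfalso
      rw [h] at hKspec
      have h0 : greedyLen n X g 0 = 0 := rfl
      omega
    · exact h
  have hKT : Nat.find hex ≤ T.card := Nat.find_le hreach
  have hcut := greedy_cutset hn hc2 g (Nat.find hex) hK0 hKmin hKspec
  have hcard1 : arcNumber n X ≤ ((Finset.range (Nat.find hex)).image (greedyIter n X g)).card :=
    Nat.sInf_le ⟨_, hcut, rfl⟩
  have hcard2 : ((Finset.range (Nat.find hex)).image (greedyIter n X g)).card ≤ Nat.find hex :=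
    le_trans Finset.card_image_le (le_of_eq (Finset.card_range _))
  exact ⟨g, Nat.find hex, hK0, hKmin, hKspec, hcut, by omega⟩
end basic
end

section
/- If a chord diagram D contains two disjoint front-maximal properly embedded arcs m1 and m2 with the same obstructing chord, then D has arc number 2. -/
/- ------------------ auxiliary lemmas ------------------ -/

lemma eq_of_mem_card_two {α : Type*} [DecidableEq α] {c : Finset α} (h : c.card = 2)
    {u v w : α} (hu : u ∈ c) (hv : v ∈ c) (hw : w ∈ c) (hvu : v ≠ u) (hwu : w ≠ u) :
    v = w := by
  have h1 : (c.erase u).card = 1 := by rw [Finset.card_erase_of_mem hu, h]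
  obtain ⟨z, hz⟩ := Finset.card_eq_one.mp h1
  have hv' : v ∈ c.erase u := Finset.mem_erase.mpr ⟨hvu, hv⟩
  have hw' : w ∈ c.erase u := Finset.mem_erase.mpr ⟨hwu, hw⟩
  rw [hz, Finset.mem_singleton] at hv' hw'
  rw [hv', hw']

lemma gap_partition {N : ℕ} [NeZero N] {a b : ZMod N} (h : a ≠ b) (g : ZMod N) :
    gapIn a b g ↔ ¬ gapIn b a g := by
  unfold gapIn
  have hd : b - a ≠ 0 := sub_ne_zero.mpr h.symm
  haveI : NeZero (b - a) := ⟨hd⟩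
  have hneg : (a - b).val = N - (b - a).val := by
    rw [← neg_sub b a]; exact ZMod.val_neg_of_ne_zero _
  have hdpos : 0 < (b - a).val := ZMod.val_pos.mpr hd
  have hrw : g - b = (g - a) - (b - a) := by ring
  rw [hrw, hneg]
  have hslt := ZMod.val_lt (g - a)
  have hdlt := ZMod.val_lt (b - a)
  rcases lt_or_ge (g - a).val (b - a).val with hs | hs
  · have hne2 : (b - a) - (g - a) ≠ 0 := by
      intro h0
      have h1 := sub_eq_zero.mp h0
      rw [h1] at hs; exact lt_irrefl _ hs
    haveI : NeZero ((b - a) - (g - a)) := ⟨hne2⟩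
    have e1 : ((b - a) - (g - a)).val = (b - a).val - (g - a).val := ZMod.val_sub hs.le
    have e2 : ((g - a) - (b - a)).val = N - ((b - a) - (g - a)).val := by
      rw [← neg_sub ((b : ZMod N) - a) (g - a)]; exact ZMod.val_neg_of_ne_zero _
    omega
  · have e1 : ((g - a) - (b - a)).val = (g - a).val - (b - a).val := ZMod.val_sub hs
    omega

lemma pointIn_mono {N : ℕ} [NeZero N] {g h e p : ZMod N}
    (h1 : pointIn g e (h + 1)) (h2 : pointIn h e p) : pointIn g e p := by
  unfold pointIn at *
  rw [show (h + 1 - g - 1 : ZMod N) = h - g by ring] at h1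
  have hk : (h - g).val ≤ (e - g).val := h1.le
  have e2 : (e - h).val = (e - g).val - (h - g).val := by
    rw [show (e - h : ZMod N) = (e - g) - (h - g) by ring, ZMod.val_sub hk]
  have e3 : (p - g - 1).val ≤ (p - h - 1).val + (h - g).val := by
    rw [show (p - g - 1 : ZMod N) = (p - h - 1) + (h - g) by ring]
    exact ZMod.val_add_le _ _
  omega

lemma gap_of_points {N : ℕ} [NeZero N] [Fact (1 < N)] {g1' g2' a b : ZMod N}
    (hne : g1' ≠ g2') (ha : pointIn g1' g2' a) (hb : pointIn g2' g1' b) :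
    gapIn a b g2' := by
  unfold pointIn at ha hb
  unfold gapIn
  have hd : g2' - g1' ≠ 0 := sub_ne_zero.mpr hne.symm
  haveI : NeZero (g2' - g1') := ⟨hd⟩
  have hdpos : 0 < (g2' - g1').val := ZMod.val_pos.mpr hd
  have hdlt := ZMod.val_lt (g2' - g1')
  have hneg : (g1' - g2').val = N - (g2' - g1').val := by
    rw [← neg_sub g2' g1']; exact ZMod.val_neg_of_ne_zero _
  have h1v : (1 : ZMod N).val = 1 := ZMod.val_one N
  have e1 : (g2' - g1' - 1).val = (g2' - g1').val - 1 := by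
    rw [ZMod.val_sub (by rw [h1v]; omega), h1v]
  have hα : (a - g1' - 1).val ≤ (g2' - g1' - 1).val := by omega
  have e2 : (g2' - a).val = (g2' - g1' - 1).val - (a - g1' - 1).val := by
    rw [show (g2' - a : ZMod N) = (g2' - g1' - 1) - (a - g1' - 1) by ring, ZMod.val_sub hα]
  have e3 : (g2' - a + 1).val = (g2' - a).val + 1 := by
    rw [ZMod.val_add_of_lt (by rw [h1v]; omega), h1v]
  have e4 : (b - a).val = (b - g2' - 1).val + ((g2' - a + 1)).val := by
    rw [show (b - a : ZMod N) = (b - g2' - 1) + (g2' - a + 1) by ring,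
      ZMod.val_add_of_lt (by rw [e3]; omega)]
  omega

lemma pointIn_iff_gapIn {N : ℕ} (g g' p : ZMod N) :
    pointIn g g' p ↔ gapIn (g + 1) (g' + 1) p := by
  unfold pointIn gapIn
  rw [show (p - (g + 1) : ZMod N) = p - g - 1 by ring,
    show (g' + 1 - (g + 1) : ZMod N) = g' - g by ring]

lemma not_pointIn_self {N : ℕ} (g g' : ZMod N) : ¬ pointIn g g' (g' + 1) := by
  unfold pointIn
  rw [show (g' + 1 - g - 1 : ZMod N) = g' - g by ring]
  exact lt_irrefl _

/-- If a chord diagram contains two disjoint front-maximal properly embedded arcs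
with the same obstructing chord, then it has arc number 2. -/
theorem stmt_7 (n : ℕ) (X : Finset (Finset (ZMod (2 * n))))
    (hD : IsDiagram n X)
    (g1 g1' g2 g2' : ZMod (2 * n))
    (h1 : FrontMax n X g1 g1') (h2 : FrontMax n X g2 g2')
    (hdisj : ∀ p : ZMod (2 * n), ¬ (pointIn g1 g1' p ∧ pointIn g2 g2' p))
    (c : Finset (ZMod (2 * n))) (hc : c ∈ X)
    (hc1 : (g1' + 1) ∈ c ∧ ∃ p ∈ c, pointIn g1 g1' p)
    (hc2 : (g2' + 1) ∈ c ∧ ∃ p ∈ c, pointIn g2 g2' p) :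
    arcNumber n X = 2 := by
  -- n ≠ 0
  have hn : n ≠ 0 := by
    intro h0
    have : X = ∅ := Finset.card_eq_zero.mp (by rw [hD.1, h0])
    rw [this] at hc; exact absurd hc (Finset.notMem_empty c)
  haveI : NeZero (2 * n) := ⟨by omega⟩
  haveI : Fact (1 < 2 * n) := ⟨by omega⟩
  obtain ⟨hg1m, p1, hp1c, hp1⟩ := hc1
  obtain ⟨hg2m, p2, hp2c, hp2⟩ := hc2
  have hcard : c.card = 2 := hD.2.1 c hc
  have hp1ne : p1 ≠ g1' + 1 := fun h => not_pointIn_self g1 g1' (h ▸ hp1)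
  have hp2ne : p2 ≠ g2' + 1 := fun h => not_pointIn_self g2 g2' (h ▸ hp2)
  -- g1' ≠ g2'
  have hne : g1' ≠ g2' := by
    intro h
    have hp2ne' : p2 ≠ g1' + 1 := by rw [h]; exact hp2ne
    have : p1 = p2 := eq_of_mem_card_two hcard hg1m hp1c hp2c hp1ne hp2ne'
    exact hdisj p1 ⟨hp1, this ▸ hp2⟩
  have h12 : (g1' + 1 : ZMod (2 * n)) ≠ g2' + 1 := fun h => hne (by
    have := add_right_cancel h; exact this)
  -- the obstructing chord is {g1'+1, g2'+1}
  have hq1 : p1 = g2' + 1 := eq_of_mem_card_two hcard hg1m hp1c hg2m hp1ne h12.symm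
  have hq2 : p2 = g1' + 1 := eq_of_mem_card_two hcard hg2m hp2c hg1m hp2ne h12
  have hpa : pointIn g1 g1' (g2' + 1) := hq1 ▸ hp1
  have hpb : pointIn g2 g2' (g1' + 1) := hq2 ▸ hp2
  -- every point lies in one of the two arcs (g1', g2'] and (g2', g1']
  have hclass : ∀ q : ZMod (2 * n), pointIn g1' g2' q ∨ pointIn g2' g1' q := by
    intro q
    by_cases hq : pointIn g1' g2' q
    · exact Or.inl hq
    · right
      rw [pointIn_iff_gapIn] at hq ⊢
      by_contra hq2'
      exact hq ((gap_partition h12 q).mpr hq2')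
  -- {g1', g2'} is a cut set
  have hS : IsCutSet n X {g1', g2'} := by
    refine ⟨⟨g1', by simp⟩, ?_⟩
    intro c' hc' a ha b hb hab
    have hcard' : c'.card = 2 := hD.2.1 c' hc'
    have mem_pair : ∀ p ∈ c', p = a ∨ p = b := by
      intro p hp
      by_cases hpa' : p = a
      · exact Or.inl hpa'
      · exact Or.inr (eq_of_mem_card_two hcard' ha hp hb hpa' (Ne.symm hab))
    rcases hclass a with haA | haB <;> rcases hclass b with hbA | hbB
    · -- both in (g1', g2'] ⊆ (g2, g2'] : contradicts properness of arc 2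
      exfalso
      obtain ⟨p, hpc', hnp⟩ := h2.1 c' hc'
      rcases mem_pair p hpc' with rfl | rfl
      · exact hnp (pointIn_mono hpb haA)
      · exact hnp (pointIn_mono hpb hbA)
    · exact ⟨g2', by simp, gap_of_points hne haA hbB⟩
    · exact ⟨g1', by simp, gap_of_points hne.symm haB hbA⟩
    · -- both in (g2', g1'] ⊆ (g1, g1'] : contradicts properness of arc 1
      exfalso
      obtain ⟨p, hpc', hnp⟩ := h1.1 c' hc'
      rcases mem_pair p hpc' with rfl | rfl
      · exact hnp (pointIn_mono hpa haB)
      · exact hnp (pointIn_mono hpa hbB)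
  -- compute the infimum
  have h2mem : 2 ∈ {k | ∃ S, IsCutSet n X S ∧ S.card = k} :=
    ⟨{g1', g2'}, hS, Finset.card_pair hne⟩
  have hlb : ∀ k ∈ {k | ∃ S, IsCutSet n X S ∧ S.card = k}, 2 ≤ k := by
    rintro k ⟨S, ⟨hSne, hScut⟩, rfl⟩
    by_contra hlt
    push_neg at hlt
    have hS1 : S.card = 1 := by
      have := Finset.card_pos.mpr hSne
      omega
    obtain ⟨g, rfl⟩ := Finset.card_eq_one.mp hS1
    obtain ⟨g', hg', hgab⟩ := hScut c hc (g1' + 1) hg1m (g2' + 1) hg2m h12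
    obtain ⟨g'', hg'', hgba⟩ := hScut c hc (g2' + 1) hg2m (g1' + 1) hg1m h12.symm
    rw [Finset.mem_singleton] at hg' hg''
    subst hg'; subst hg''
    exact (gap_partition h12 _).mp hgab hgba
  unfold arcNumber
  exact le_antisymm (Nat.sInf_le h2mem) (le_csInf ⟨2, h2mem⟩ hlb)
end

section
/- If m1 and m2 are disjoint front-maximal properly embedded arcs in a chord diagram that are components of the complement of a common cut set, then their obstructing chords c(m1) and c(m2) bound disjoint preferred arcs: the arc r(c(m1)) from the back endpoint of c(m1) to the front boundary of m1, and the analogous arc r(c(m2)), are disjoint. -/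
/-- `g` and `g'` are consecutive cuts of `S` (no cut strictly between them going
forward from `g`). -/
def Consec {N : ℕ} (S : Finset (ZMod N)) (g g' : ZMod N) : Prop :=
  g ∈ S ∧ g' ∈ S ∧ g ≠ g' ∧ ∀ h ∈ S, gapIn g g' h → h = g

lemma ptIn_trans {N : ℕ} [NeZero N] (hN : 1 < N) {g g' b p : ZMod N}
    (h1 : pointIn g g' b) (h2 : pointIn b g' p) : pointIn g g' p := by
  unfold pointIn at *
  have hG : (g' - g).val < N := ZMod.val_lt _
  have hB1 : 1 ≤ (b - g).val := by
    rcases Nat.eq_zero_or_pos (b - g).val with h | h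
    · exfalso
      have : b - g = 0 := (ZMod.val_eq_zero _).mp h
      have hbg : b = g := by linear_combination this
      subst hbg
      have : b - b - 1 = -1 := by ring
      rw [this] at h1
      have hv : ((-1 : ZMod N)).val = N - 1 := by
        obtain ⟨m, rfl⟩ : ∃ m, N = m + 1 := ⟨N - 1, by omega⟩
        simpa using ZMod.val_neg_one m
      omega
    · exact h
  have hval1 : (1 : ZMod N).val = 1 := by haveI : Fact (1 < N) := ⟨hN⟩; exact ZMod.val_one N
  have e1 : (b - g - 1).val = (b - g).val - 1 := by
    rw [ZMod.val_sub (by omega), hval1]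
  have hBG : (b - g).val ≤ (g' - g).val := by omega
  have e2 : (g' - b).val = (g' - g).val - (b - g).val := by
    have : g' - b = (g' - g) - (b - g) := by ring
    rw [this, ZMod.val_sub hBG]
  rw [e2] at h2
  have e3 : p - g - 1 = (p - b - 1) + (b - g) := by ring
  rw [e3, ZMod.val_add]
  have : (p - b - 1).val + (b - g).val < (g' - g).val := by omega
  rw [Nat.mod_eq_of_lt (by omega)]
  exact this

lemma gapIn_meet {N : ℕ} [NeZero N] {a b c d x : ZMod N}
    (h1 : gapIn a b x) (h2 : gapIn c d x) : gapIn c d a ∨ gapIn a b c := by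
  unfold gapIn at *
  rcases le_or_gt (x - a).val (x - c).val with h | h
  · left
    have : a - c = (x - c) - (x - a) := by ring
    rw [this, ZMod.val_sub h]
    omega
  · right
    have : c - a = (x - a) - (x - c) := by ring
    rw [this, ZMod.val_sub (le_of_lt h)]
    omega

/-- If `m1` (from gap `g1` to `g1'`) and `m2` (from `g2` to `g2'`) are distinct
front-maximal arcs which are components of the complement of a common cut set `S`,
with obstructing chords `c1 ∋ b1` and `c2 ∋ b2`, then the preferred arcs
`r(c(m1))` (points strictly after `b1` up to the front end of `m1`) and
`r(c(m2))` are disjoint. -/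
theorem stmt_8 (n : ℕ) (X : Finset (Finset (ZMod (2 * n))))
    (hD : IsDiagram n X) (S : Finset (ZMod (2 * n))) (hS : IsCutSet n X S)
    (g1 g1' g2 g2' : ZMod (2 * n))
    (h1c : Consec S g1 g1') (h2c : Consec S g2 g2') (hne : g1 ≠ g2)
    (h1 : FrontMax n X g1 g1') (h2 : FrontMax n X g2 g2')
    (c1 c2 : Finset (ZMod (2 * n))) (b1 b2 : ZMod (2 * n))
    (hc1 : c1 ∈ X ∧ (g1' + 1) ∈ c1 ∧ b1 ∈ c1 ∧ pointIn g1 g1' b1)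
    (hc2 : c2 ∈ X ∧ (g2' + 1) ∈ c2 ∧ b2 ∈ c2 ∧ pointIn g2 g2' b2) :
    ∀ p : ZMod (2 * n), ¬ (pointIn b1 g1' p ∧ pointIn b2 g2' p) := by
  -- n is positive since c1 is a chord
  have hn : 0 < n := by
    rcases Nat.eq_zero_or_pos n with h | h
    · exfalso
      have hX : X = ∅ := Finset.card_eq_zero.mp (by rw [hD.1, h])
      rw [hX] at hc1
      exact absurd hc1.1 (Finset.notMem_empty _)
    · exact h
  have : NeZero (2 * n) := ⟨by omega⟩
  have hN : 1 < 2 * n := by omega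
  intro p ⟨hp1, hp2⟩
  have hm1 : pointIn g1 g1' p := ptIn_trans hN hc1.2.2.2 hp1
  have hm2 : pointIn g2 g2' p := ptIn_trans hN hc2.2.2.2 hp2
  have hg1 : gapIn g1 g1' (p - 1) := by
    unfold pointIn at hm1; unfold gapIn
    have : p - 1 - g1 = p - g1 - 1 := by ring
    rw [this]; exact hm1
  have hg2 : gapIn g2 g2' (p - 1) := by
    unfold pointIn at hm2; unfold gapIn
    have : p - 1 - g2 = p - g2 - 1 := by ring
    rw [this]; exact hm2
  rcases gapIn_meet hg1 hg2 with h | h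
  · exact hne (h2c.2.2.2 g1 h1c.1 h)
  · exact hne (h1c.2.2.2 g2 h2c.1 h).symm
end

section
/- For a ≥ 1 and t ≥ 1, the star S_{t,a} has arc number exactly a + 2. -/
/-- The `k`-th chord `c_{2k} = {h_{2k}, h_{2k + 2t - 1}}` of the star `S_{t,a}`,
a diagram on `2(1+(a+1)t)` cyclically ordered points. -/
def starChord (t a k : ℕ) : Finset (ZMod (2 * (1 + (a + 1) * t))) :=
  {((2 * k : ℕ) : ZMod (2 * (1 + (a + 1) * t))),
   ((2 * k + (2 * t - 1) : ℕ) : ZMod (2 * (1 + (a + 1) * t)))}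

/-- The chord set of the star `S_{t,a}`: the chords `{h_j, h_{j+2t-1}}` for all
even `j` modulo `2(1+(a+1)t)`. -/
def starChords (t a : ℕ) : Finset (Finset (ZMod (2 * (1 + (a + 1) * t)))) :=
  (Finset.range (1 + (a + 1) * t)).image (starChord t a)


lemma castSubVal {N : ℕ} [NeZero N] (p m r : ℕ) (hr : r < N)
    (h : m + r = p ∨ m + r = p + N) :
    ((p : ZMod N) - (m : ZMod N)).val = r := by
  have hz : (p : ZMod N) - (m : ZMod N) = ((r : ℕ) : ZMod N) := by
    rcases h with h | h
    · rw [← h]; push_cast; ring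
    · have h2 : ((m + r : ℕ) : ZMod N) = ((p + N : ℕ) : ZMod N) := by rw [h]
      push_cast [ZMod.natCast_self] at h2
      linear_combination -h2
  rw [hz, ZMod.val_cast_of_lt hr]

lemma lower_bound (t a : ℕ) (ht : 1 ≤ t) (ha : 1 ≤ a)
    (S : Finset (ZMod (2 * (1 + (a + 1) * t))))
    (hS : IsCutSet (1 + (a + 1) * t) (starChords t a) S) :
    a + 2 ≤ S.card := by
  have hB : t ≤ (a + 1) * t := Nat.le_mul_of_pos_left t (by omega)
  haveI : NeZero (2 * (1 + (a + 1) * t)) := ⟨by positivity⟩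
  have H : ∀ k ∈ Finset.range (1 + (a + 1) * t),
      ∃ g, g ∈ S ∧ (g - ((2 * k : ℕ) : ZMod (2 * (1 + (a + 1) * t)))).val < 2 * t - 1 := by
    intro k hk
    have hc : starChord t a k ∈ starChords t a := Finset.mem_image_of_mem _ hk
    have hx : ((2 * k : ℕ) : ZMod (2 * (1 + (a + 1) * t))) ∈ starChord t a k := by
      simp [starChord]
    have hy : ((2 * k + (2 * t - 1) : ℕ) : ZMod (2 * (1 + (a + 1) * t))) ∈ starChord t a k := by
      simp [starChord]
    have hval : (((2 * k + (2 * t - 1) : ℕ) : ZMod (2 * (1 + (a + 1) * t)))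
        - ((2 * k : ℕ) : ZMod (2 * (1 + (a + 1) * t)))).val = 2 * t - 1 :=
      castSubVal _ _ _ (by omega) (Or.inl rfl)
    have hxy : ((2 * k : ℕ) : ZMod (2 * (1 + (a + 1) * t)))
        ≠ ((2 * k + (2 * t - 1) : ℕ) : ZMod (2 * (1 + (a + 1) * t))) := by
      intro h
      rw [← h, sub_self, ZMod.val_zero] at hval
      omega
    obtain ⟨g, hgS, hg⟩ := hS.2 _ hc _ hx _ hy hxy
    rw [gapIn, hval] at hg
    exact ⟨g, hgS, hg⟩
  choose f hf1 hf2 using H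
  classical
  set F : ℕ → ZMod (2 * (1 + (a + 1) * t)) :=
    fun k => if h : k ∈ Finset.range (1 + (a + 1) * t) then f k h else 0 with hF
  have hFmem : ∀ k ∈ Finset.range (1 + (a + 1) * t), F k ∈ S := by
    intro k hk; rw [hF]; simp only [dif_pos hk]; exact hf1 k hk
  have hFval : ∀ k ∈ Finset.range (1 + (a + 1) * t),
      (F k - ((2 * k : ℕ) : ZMod (2 * (1 + (a + 1) * t)))).val < 2 * t - 1 := by
    intro k hk; rw [hF]; simp only [dif_pos hk]; exact hf2 k hk
  have hcard := Finset.card_eq_sum_card_fiberwise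
    (f := F) (s := Finset.range (1 + (a + 1) * t))
    (t := (Finset.range (1 + (a + 1) * t)).image F)
    (fun k hk => Finset.mem_image_of_mem F hk)
  have hfib : ∀ g ∈ (Finset.range (1 + (a + 1) * t)).image F,
      ((Finset.range (1 + (a + 1) * t)).filter (fun k => F k = g)).card ≤ t := by
    intro g _
    have hsub : ((Finset.range (1 + (a + 1) * t)).filter (fun k => F k = g))
        ⊆ ((Finset.range (1 + (a + 1) * t)).filter
            (fun k => (g - ((2 * k : ℕ) : ZMod (2 * (1 + (a + 1) * t)))).val < 2 * t - 1)) := by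
      intro k hk
      rw [Finset.mem_filter] at hk ⊢
      refine ⟨hk.1, ?_⟩
      have := hFval k hk.1
      rw [hk.2] at this
      exact this
    refine le_trans (Finset.card_le_card hsub) ?_
    have := Finset.card_le_card_of_injOn
      (f := fun k => (g - ((2 * k : ℕ) : ZMod (2 * (1 + (a + 1) * t)))).val / 2)
      (s := (Finset.range (1 + (a + 1) * t)).filter
            (fun k => (g - ((2 * k : ℕ) : ZMod (2 * (1 + (a + 1) * t)))).val < 2 * t - 1))
      (t := Finset.range t) ?_ ?_
    · simpa using this
    · intro k hk
      rw [Finset.mem_coe, Finset.mem_filter] at hk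
      rw [Finset.mem_coe, Finset.mem_range]
      dsimp only
      omega
    · intro k hk k' hk' hkk'
      simp only [Finset.coe_filter, Set.mem_setOf_eq, Finset.mem_range] at hk hk'
      dsimp only at hkk'
      obtain ⟨v, hv⟩ : ∃ v, (g - ((2 * k : ℕ) : ZMod (2 * (1 + (a + 1) * t)))).val = v := ⟨_, rfl⟩
      obtain ⟨v', hv'⟩ : ∃ v', (g - ((2 * k' : ℕ) : ZMod (2 * (1 + (a + 1) * t)))).val = v' := ⟨_, rfl⟩
      rw [hv, hv'] at hkk'
      rw [hv] at hk
      rw [hv'] at hk'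
      have hg1 : ((2 * k + v : ℕ) : ZMod (2 * (1 + (a + 1) * t))) = g := by
        rw [Nat.cast_add, ← hv, ZMod.natCast_rightInverse _]
        ring
      have hg2 : ((2 * k' + v' : ℕ) : ZMod (2 * (1 + (a + 1) * t))) = g := by
        rw [Nat.cast_add, ← hv', ZMod.natCast_rightInverse _]
        ring
      have hmod : 2 * k + v ≡ 2 * k' + v' [MOD 2 * (1 + (a + 1) * t)] :=
        (ZMod.natCast_eq_natCast_iff _ _ _).mp (hg1.trans hg2.symm)
      have hmod2 : (2 * k + v) % 2 = (2 * k' + v') % 2 := hmod.of_dvd ⟨_, rfl⟩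
      have hvv : v = v' := by omega
      subst hvv
      have h2 : (2 * k) % (2 * (1 + (a + 1) * t)) = (2 * k') % (2 * (1 + (a + 1) * t)) :=
        Nat.ModEq.add_right_cancel' v hmod
      rw [Nat.mod_eq_of_lt (by omega), Nat.mod_eq_of_lt (by omega)] at h2
      omega
  have hsum : ∑ g ∈ (Finset.range (1 + (a + 1) * t)).image F,
      ((Finset.range (1 + (a + 1) * t)).filter (fun k => F k = g)).card
      ≤ ((Finset.range (1 + (a + 1) * t)).image F).card • t :=
    Finset.sum_le_card_nsmul _ _ t hfib
  have himg : ((Finset.range (1 + (a + 1) * t)).image F).card ≤ S.card := by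
    apply Finset.card_le_card
    intro g hg
    obtain ⟨k, hk, rfl⟩ := Finset.mem_image.mp hg
    exact hFmem k hk
  rw [Finset.card_range] at hcard
  rw [smul_eq_mul] at hsum
  by_contra hcon
  push_neg at hcon
  have hle : S.card ≤ a + 1 := by omega
  have h1 : ((Finset.range (1 + (a + 1) * t)).image F).card * t ≤ (a + 1) * t :=
    Nat.mul_le_mul_right t (le_trans himg hle)
  omega

lemma upper_bound (t a : ℕ) (ht : 1 ≤ t) (ha : 1 ≤ a) :
    ∃ S, IsCutSet (1 + (a + 1) * t) (starChords t a) S ∧ S.card = a + 2 := by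
  have hB : t ≤ (a + 1) * t := Nat.le_mul_of_pos_left t (by omega)
  have hB2 : 2 * t ≤ (a + 1) * t := Nat.mul_le_mul_right t (by omega)
  haveI : NeZero (2 * (1 + (a + 1) * t)) := ⟨by positivity⟩
  refine ⟨(Finset.range (a + 2)).image
      (fun i => ((2 * t * i : ℕ) : ZMod (2 * (1 + (a + 1) * t)))), ⟨?_, ?_⟩, ?_⟩
  · exact Finset.Nonempty.image ⟨0, Finset.mem_range.mpr (by omega)⟩ _
  · intro c hc p₁ hp₁ p₂ hp₂ hne
    obtain ⟨k, hk, rfl⟩ := Finset.mem_image.mp hc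
    rw [Finset.mem_range] at hk
    simp only [starChord, Finset.mem_insert, Finset.mem_singleton] at hp₁ hp₂
    -- division facts
    obtain ⟨q, hq1, hq2, hqle⟩ : ∃ q, k ≤ t * q ∧ t * q ≤ k + t - 1 ∧ q < a + 2 := by
      refine ⟨(k + t - 1) / t, ?_, ?_, ?_⟩
      · have hdm := Nat.div_add_mod (k + t - 1) t
        have hmod : (k + t - 1) % t < t := Nat.mod_lt _ (by omega)
        omega
      · have hdm := Nat.div_add_mod (k + t - 1) t
        have hmod : (k + t - 1) % t < t := Nat.mod_lt _ (by omega)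
        omega
      · rw [Nat.div_lt_iff_lt_mul (by omega : 0 < t)]
        have : (a + 2) * t = (a + 1) * t + t := by ring
        omega
    have hvyx : (((2 * k + (2 * t - 1) : ℕ) : ZMod (2 * (1 + (a + 1) * t)))
        - ((2 * k : ℕ) : ZMod (2 * (1 + (a + 1) * t)))).val = 2 * t - 1 :=
      castSubVal _ _ _ (by omega) (Or.inl rfl)
    have hvxy : (((2 * k : ℕ) : ZMod (2 * (1 + (a + 1) * t)))
        - ((2 * k + (2 * t - 1) : ℕ) : ZMod (2 * (1 + (a + 1) * t)))).val
        = 2 * (1 + (a + 1) * t) - (2 * t - 1) :=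
      castSubVal _ _ _ (by omega) (Or.inr (by omega))
    rcases hp₁ with h1 | h1 <;> rcases hp₂ with h2 | h2
    · exact absurd (h1.trans h2.symm) hne
    · -- forward: p₁ = h_{2k}, p₂ = h_{2k+2t-1}
      refine ⟨((2 * t * q : ℕ) : ZMod (2 * (1 + (a + 1) * t))),
        Finset.mem_image_of_mem _ (Finset.mem_range.mpr hqle), ?_⟩
      rw [gapIn, h1, h2, hvyx]
      have h2tq : 2 * t * q = 2 * (t * q) := by ring
      have hval : (((2 * t * q : ℕ) : ZMod (2 * (1 + (a + 1) * t)))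
          - ((2 * k : ℕ) : ZMod (2 * (1 + (a + 1) * t)))).val = 2 * t * q - 2 * k :=
        castSubVal _ _ _ (by omega) (Or.inl (by omega))
      rw [hval]
      omega
    · -- backward: p₁ = h_{2k+2t-1}, p₂ = h_{2k}
      by_cases hqa : q ≤ a
      · refine ⟨((2 * t * (q + 1) : ℕ) : ZMod (2 * (1 + (a + 1) * t))),
          Finset.mem_image_of_mem _ (Finset.mem_range.mpr (by omega)), ?_⟩
        rw [gapIn, h1, h2, hvxy]
        have h2tq : 2 * t * (q + 1) = 2 * (t * q) + 2 * t := by ring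
        have hval : (((2 * t * (q + 1) : ℕ) : ZMod (2 * (1 + (a + 1) * t)))
            - ((2 * k + (2 * t - 1) : ℕ) : ZMod (2 * (1 + (a + 1) * t)))).val
            = 2 * t * (q + 1) - (2 * k + (2 * t - 1)) :=
          castSubVal _ _ _ (by omega) (Or.inl (by omega))
        rw [hval]
        omega
      · -- q = a + 1, use the cut at 2t
        have hq : q = a + 1 := by omega
        subst hq
        have htq : t * (a + 1) = (a + 1) * t := mul_comm _ _
        refine ⟨((2 * t * 1 : ℕ) : ZMod (2 * (1 + (a + 1) * t))),
          Finset.mem_image_of_mem _ (Finset.mem_range.mpr (by omega)), ?_⟩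
        rw [gapIn, h1, h2, hvxy]
        have hval : (((2 * t * 1 : ℕ) : ZMod (2 * (1 + (a + 1) * t)))
            - ((2 * k + (2 * t - 1) : ℕ) : ZMod (2 * (1 + (a + 1) * t)))).val
            = 2 * (1 + (a + 1) * t) - 2 * k + 1 :=
          castSubVal _ _ _ (by omega) (Or.inr (by omega))
        rw [hval]
        omega
    · exact absurd (h1.trans h2.symm) hne
  · rw [Finset.card_image_of_injOn, Finset.card_range]
    intro i hi j hj hij
    simp only [Finset.coe_range, Set.mem_Iio] at hi hj
    have hvi : ((2 * t * i : ℕ) : ZMod (2 * (1 + (a + 1) * t))).val = 2 * t * i := by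
      apply ZMod.val_cast_of_lt
      have h1 : t * i ≤ t * (a + 1) := Nat.mul_le_mul_left _ (by omega)
      have h2 : t * (a + 1) = (a + 1) * t := mul_comm _ _
      have h3 : 2 * t * i = 2 * (t * i) := by ring
      omega
    have hvj : ((2 * t * j : ℕ) : ZMod (2 * (1 + (a + 1) * t))).val = 2 * t * j := by
      apply ZMod.val_cast_of_lt
      have h1 : t * j ≤ t * (a + 1) := Nat.mul_le_mul_left _ (by omega)
      have h2 : t * (a + 1) = (a + 1) * t := mul_comm _ _
      have h3 : 2 * t * j = 2 * (t * j) := by ring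
      omega
    have := congrArg ZMod.val hij
    rw [hvi, hvj] at this
    exact Nat.eq_of_mul_eq_mul_left (by omega : 0 < 2 * t) this

/-- For `a ≥ 1` and `t ≥ 1`, the star `S_{t,a}` has arc number exactly `a + 2`. -/
theorem stmt_11 (t a : ℕ) (ht : 1 ≤ t) (ha : 1 ≤ a) :
    arcNumber (1 + (a + 1) * t) (starChords t a) = a + 2 := by
  obtain ⟨S, hS, hcard⟩ := upper_bound t a ht ha
  apply le_antisymm
  · exact Nat.sInf_le ⟨S, hS, hcard⟩
  · refine le_csInf ⟨a + 2, S, hS, hcard⟩ ?_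
    rintro k ⟨S', hS', rfl⟩
    exact lower_bound t a ht ha S' hS'
end

section
/- For a ≥ 1 and t ≥ 1, the arc number of the star S_{t,a} is at most a + 2: explicitly, one can exhibit a cut set of size a+2 whose complementary arcs are all properly embedded. -/
/-- For `a ≥ 1`, `t ≥ 1`, the star `S_{t,a}` admits an explicit cut set of size
`a + 2` (all complementary arcs properly embedded), so its arc number is at most
`a + 2`. -/
theorem stmt_12 (t a : ℕ) (ht : 1 ≤ t) (ha : 1 ≤ a) :
    (∃ S : Finset (ZMod (2 * (1 + (a + 1) * t))),
        IsCutSet (1 + (a + 1) * t) (starChords t a) S ∧ S.card = a + 2) ∧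
      arcNumber (1 + (a + 1) * t) (starChords t a) ≤ a + 2 := by
  have hta : t ≤ (a + 1) * t := Nat.le_mul_of_pos_left t (by omega)
  have h2ta : 2 * t ≤ (a + 1) * t := Nat.mul_le_mul_right t (by omega)
  haveI : NeZero (2 * (1 + (a + 1) * t)) := ⟨by omega⟩
  have h2t1N : 2 * t - 1 < 2 * (1 + (a + 1) * t) := by omega
  have hval : ∀ x : ℕ, x < 2 * (1 + (a + 1) * t) →
      ((x : ZMod (2 * (1 + (a + 1) * t)))).val = x := fun x h => ZMod.val_cast_of_lt h
  have hmain : ∃ S : Finset (ZMod (2 * (1 + (a + 1) * t))),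
      IsCutSet (1 + (a + 1) * t) (starChords t a) S ∧ S.card = a + 2 := by
    refine ⟨(Finset.range (a + 2)).image
        (fun i => ((2 * t * i : ℕ) : ZMod (2 * (1 + (a + 1) * t)))), ⟨?_, ?_⟩, ?_⟩
    · exact ⟨_, Finset.mem_image.mpr ⟨0, Finset.mem_range.mpr (by omega), rfl⟩⟩
    · intro c hc x hx y hy hxy
      simp only [starChords, Finset.mem_image, Finset.mem_range] at hc
      obtain ⟨k, hk, rfl⟩ := hc
      simp only [starChord, Finset.mem_insert, Finset.mem_singleton] at hx hy
      have h2k : 2 * k < 2 * (1 + (a + 1) * t) := by omega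
      have hdm := Nat.div_add_mod (k + (t - 1)) t
      have hmod := Nat.mod_lt (k + (t - 1)) (show 0 < t by omega)
      set i0 := (k + (t - 1)) / t with hi0def
      set m := t * i0 with hm
      have hkm : k ≤ m ∧ m ≤ k + (t - 1) := by omega
      have hi0 : i0 ≤ a + 1 := by
        have h1 : k + (t - 1) ≤ (t - 1) + (a + 1) * t := by omega
        have h2 := Nat.div_le_div_right (c := t) h1
        rwa [Nat.add_mul_div_right _ _ (show 0 < t by omega),
          Nat.div_eq_of_lt (show t - 1 < t by omega), Nat.zero_add] at h2
      have hqp : ((2 * k + (2 * t - 1) : ℕ) : ZMod (2 * (1 + (a + 1) * t)))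
            - ((2 * k : ℕ) : ZMod (2 * (1 + (a + 1) * t)))
          = ((2 * t - 1 : ℕ) : ZMod (2 * (1 + (a + 1) * t))) := by
        rw [show 2 * k + (2 * t - 1) = (2 * t - 1) + 2 * k from by omega]
        push_cast
        ring
      have hpq : ((2 * k : ℕ) : ZMod (2 * (1 + (a + 1) * t)))
            - ((2 * k + (2 * t - 1) : ℕ) : ZMod (2 * (1 + (a + 1) * t)))
          = ((2 * (1 + (a + 1) * t) - (2 * t - 1) : ℕ) : ZMod (2 * (1 + (a + 1) * t))) := by
        rw [Nat.cast_sub (le_of_lt h2t1N), ZMod.natCast_self, ← hqp]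
        ring
      have G1 : ∃ g ∈ (Finset.range (a + 2)).image
            (fun i => ((2 * t * i : ℕ) : ZMod (2 * (1 + (a + 1) * t)))),
          gapIn ((2 * k : ℕ) : ZMod (2 * (1 + (a + 1) * t)))
            ((2 * k + (2 * t - 1) : ℕ) : ZMod (2 * (1 + (a + 1) * t))) g := by
        refine ⟨((2 * t * i0 : ℕ) : ZMod (2 * (1 + (a + 1) * t))),
          Finset.mem_image.mpr ⟨i0, Finset.mem_range.mpr (by omega), rfl⟩, ?_⟩
        unfold gapIn
        rw [hqp, hval _ h2t1N]
        have e2 : ((2 * t * i0 : ℕ) : ZMod (2 * (1 + (a + 1) * t)))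
              - ((2 * k : ℕ) : ZMod (2 * (1 + (a + 1) * t)))
            = ((2 * m - 2 * k : ℕ) : ZMod (2 * (1 + (a + 1) * t))) := by
          rw [show 2 * t * i0 = 2 * m from by rw [hm]; ring, ← Nat.cast_sub (by omega)]
        rw [e2, hval _ (by omega)]
        omega
      have G2 : ∃ g ∈ (Finset.range (a + 2)).image
            (fun i => ((2 * t * i : ℕ) : ZMod (2 * (1 + (a + 1) * t)))),
          gapIn ((2 * k + (2 * t - 1) : ℕ) : ZMod (2 * (1 + (a + 1) * t)))
            ((2 * k : ℕ) : ZMod (2 * (1 + (a + 1) * t))) g := by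
        rcases Nat.lt_or_ge i0 (a + 1) with hlt | hge
        · refine ⟨((2 * t * (i0 + 1) : ℕ) : ZMod (2 * (1 + (a + 1) * t))),
            Finset.mem_image.mpr ⟨i0 + 1, Finset.mem_range.mpr (by omega), rfl⟩, ?_⟩
          unfold gapIn
          rw [hpq, hval _ (by omega)]
          have e2 : ((2 * t * (i0 + 1) : ℕ) : ZMod (2 * (1 + (a + 1) * t)))
                - ((2 * k + (2 * t - 1) : ℕ) : ZMod (2 * (1 + (a + 1) * t)))
              = ((2 * m + 2 * t - (2 * k + (2 * t - 1)) : ℕ) : ZMod (2 * (1 + (a + 1) * t))) := by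
            rw [show 2 * t * (i0 + 1) = 2 * m + 2 * t from by rw [hm]; ring,
              ← Nat.cast_sub (by omega)]
          rw [e2, hval _ (by omega)]
          omega
        · have hmeq : m = t * a + t := by rw [hm, show i0 = a + 1 from by omega]; ring
          have htta : t ≤ t * a := Nat.le_mul_of_pos_right t (by omega)
          have hkt : t < k := by omega
          refine ⟨((2 * t * 1 : ℕ) : ZMod (2 * (1 + (a + 1) * t))),
            Finset.mem_image.mpr ⟨1, Finset.mem_range.mpr (by omega), rfl⟩, ?_⟩
          unfold gapIn
          rw [hpq, hval _ (by omega)]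
          have e2 : ((2 * t * 1 : ℕ) : ZMod (2 * (1 + (a + 1) * t)))
                - ((2 * k + (2 * t - 1) : ℕ) : ZMod (2 * (1 + (a + 1) * t)))
              = ((2 * (1 + (a + 1) * t) + 2 * t - (2 * k + (2 * t - 1)) : ℕ)
                  : ZMod (2 * (1 + (a + 1) * t))) := by
            have hN0 : ((2 * (1 + (a + 1) * t) : ℕ) : ZMod (2 * (1 + (a + 1) * t))) = 0 :=
              ZMod.natCast_self _
            rw [Nat.cast_sub (by omega), Nat.cast_add (2 * (1 + (a + 1) * t)) (2 * t), hN0]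
            push_cast
            ring
          rw [e2, hval _ (by omega)]
          omega
      rcases hx with rfl | rfl <;> rcases hy with rfl | rfl
      · exact absurd rfl hxy
      · exact G1
      · exact G2
      · exact absurd rfl hxy
    · have hinj : Set.InjOn (fun i => ((2 * t * i : ℕ) : ZMod (2 * (1 + (a + 1) * t))))
          (Finset.range (a + 2)) := by
        intro i hi j hj hij
        simp only [Finset.coe_range, Set.mem_Iio] at hi hj
        dsimp only at hij
        have bi : 2 * t * i < 2 * (1 + (a + 1) * t) := by
          have h1 : t * i ≤ t * (a + 1) := Nat.mul_le_mul_left t (by omega)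
          have e : t * (a + 1) = (a + 1) * t := Nat.mul_comm _ _
          have e2 : 2 * t * i = 2 * (t * i) := by ring
          omega
        have bj : 2 * t * j < 2 * (1 + (a + 1) * t) := by
          have h1 : t * j ≤ t * (a + 1) := Nat.mul_le_mul_left t (by omega)
          have e : t * (a + 1) = (a + 1) * t := Nat.mul_comm _ _
          have e2 : 2 * t * j = 2 * (t * j) := by ring
          omega
        have hv := congrArg ZMod.val hij
        rw [ZMod.val_cast_of_lt bi, ZMod.val_cast_of_lt bj] at hv
        exact Nat.eq_of_mul_eq_mul_left (by omega) hv
      rw [Finset.card_image_of_injOn hinj, Finset.card_range]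
  refine ⟨hmain, Nat.sInf_le ?_⟩
  obtain ⟨S, h1, h2⟩ := hmain
  exact ⟨S, h1, h2⟩
end

section
/- For a ≥ 1 and t ≥ 1, every cut set of the star S_{t,a} has size at least a + 2. -/
lemma parity_filter_card (t p : ℕ) :
    ((Finset.range (2*t-1)).filter (fun m => m % 2 = p)).card ≤ t := by
  classical
  calc ((Finset.range (2*t-1)).filter (fun m => m % 2 = p)).card
      ≤ ((Finset.range t).image (fun i => 2*i + p)).card := by
        apply Finset.card_le_card
        intro m hm
        simp only [Finset.mem_filter, Finset.mem_range] at hm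
        simp only [Finset.mem_image, Finset.mem_range]
        exact ⟨m/2, by omega, by omega⟩
    _ ≤ t := le_trans Finset.card_image_le (by simp)

lemma fiber_bound (n t : ℕ) (hn : 0 < n) (g : ZMod (2*n)) :
    ((Finset.range n).filter (fun k => ((g - (2*k : ℕ) : ZMod (2*n))).val < 2*t - 1)).card ≤ t := by
  haveI : NeZero (2*n) := ⟨by omega⟩
  classical
  refine le_trans (Finset.card_le_card_of_injOn (fun k => ((g - (2*k : ℕ) : ZMod (2*n))).val)
    ?_ ?_) (parity_filter_card t (g.val % 2))
  · intro k hk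
    simp only [Finset.mem_coe, Finset.mem_filter, Finset.mem_range] at hk
    have h2 : (2:ℕ) ∣ 2*n := ⟨n, rfl⟩
    have key : ((((g - (2*k : ℕ) : ZMod (2*n))).val : ℕ) : ZMod 2) = ((g.val : ℕ) : ZMod 2) := by
      have e1 : (((g - (2*k : ℕ) : ZMod (2*n))).val : ZMod 2) =
          (ZMod.castHom h2 (ZMod 2)) (g - (2*k : ℕ)) := by
        rw [ZMod.castHom_apply, ZMod.natCast_val]
      have e2 : ((g.val : ℕ) : ZMod 2) = (ZMod.castHom h2 (ZMod 2)) g := by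
        rw [ZMod.castHom_apply, ZMod.natCast_val]
      rw [e1, e2, map_sub, map_natCast]
      push_cast
      have h20 : (2 : ZMod 2) = 0 := by decide
      rw [h20]
      ring
    rw [ZMod.natCast_eq_natCast_iff'] at key
    simp only [Finset.mem_coe, Finset.mem_filter, Finset.mem_range]
    exact ⟨hk.2, by omega⟩
  · intro k hk k' hk' h
    simp only [Finset.coe_filter, Set.mem_setOf_eq, Finset.mem_range] at hk hk'
    have h1 : (g - (2*k : ℕ) : ZMod (2*n)) = (g - (2*k' : ℕ) : ZMod (2*n)) :=
      ZMod.val_injective _ h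
    have h2 : ((2*k : ℕ) : ZMod (2*n)) = ((2*k' : ℕ) : ZMod (2*n)) :=
      sub_right_injective h1
    have h3 : (2*k) % (2*n) = (2*k') % (2*n) := by
      rwa [ZMod.natCast_eq_natCast_iff'] at h2
    rw [Nat.mod_eq_of_lt (by omega), Nat.mod_eq_of_lt (by omega)] at h3
    omega

/-- For `a ≥ 1`, `t ≥ 1`, every cut set of the star `S_{t,a}` has size at least
`a + 2`. -/
theorem stmt_13 (t a : ℕ) (ht : 1 ≤ t) (ha : 1 ≤ a) :
    ∀ S : Finset (ZMod (2 * (1 + (a + 1) * t))),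
      IsCutSet (1 + (a + 1) * t) (starChords t a) S → a + 2 ≤ S.card := by
  intro S hS
  classical
  have hnt : 2 * t - 1 < 2 * (1 + (a + 1) * t) := by
    have : 2 * t ≤ (a+1) * t * 2 := by nlinarith
    omega
  haveI : NeZero (2 * (1 + (a + 1) * t)) := ⟨by omega⟩
  obtain ⟨-, hcut⟩ := hS
  have hex : ∀ k : ℕ, ∃ g : ZMod (2 * (1 + (a + 1) * t)),
      k < 1 + (a + 1) * t → g ∈ S ∧
        ((g - (2*k : ℕ) : ZMod (2 * (1 + (a + 1) * t)))).val < 2*t - 1 := by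
    intro k
    by_cases hk : k < 1 + (a + 1) * t
    · have hc : starChord t a k ∈ starChords t a :=
        Finset.mem_image.mpr ⟨k, Finset.mem_range.mpr hk, rfl⟩
      set x : ZMod (2 * (1 + (a + 1) * t)) := ((2*k : ℕ) : ZMod (2 * (1 + (a + 1) * t))) with hx
      set y : ZMod (2 * (1 + (a + 1) * t)) :=
        ((2*k + (2*t-1) : ℕ) : ZMod (2 * (1 + (a + 1) * t))) with hy
      have hyx : y - x = ((2*t-1 : ℕ) : ZMod (2 * (1 + (a + 1) * t))) := by
        rw [hx, hy]; push_cast; ring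
      have hval : ((2*t-1 : ℕ) : ZMod (2 * (1 + (a + 1) * t))).val = 2*t-1 :=
        ZMod.val_cast_of_lt hnt
      have hne : x ≠ y := by
        intro h
        have h0 : ((2*t-1 : ℕ) : ZMod (2 * (1 + (a + 1) * t))).val = 0 := by
          rw [← hyx, h, sub_self, ZMod.val_zero]
        omega
      obtain ⟨g, hgS, hg⟩ := hcut _ hc x (by simp [starChord, hx]) y (by simp [starChord, hy]) hne
      refine ⟨g, fun _ => ⟨hgS, ?_⟩⟩
      unfold gapIn at hg
      rwa [hyx, hval] at hg
    · exact ⟨0, fun h => absurd h hk⟩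
  choose f hf using hex
  have hmain : (Finset.range (1 + (a + 1) * t)).card ≤ t * S.card := by
    apply Finset.card_le_mul_card_image_of_maps_to
      (f := f) (fun k hk => (hf k (Finset.mem_range.mp hk)).1)
    intro g hg
    refine le_trans (Finset.card_le_card ?_) (fiber_bound (1 + (a + 1) * t) t (by omega) g)
    intro k hk
    simp only [Finset.mem_filter, Finset.mem_range] at hk ⊢
    obtain ⟨hkn, hfk⟩ := hk
    have h5 := (hf k hkn).2
    rw [hfk] at h5
    exact ⟨hkn, h5⟩
  rw [Finset.card_range] at hmain
  by_contra hcon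
  push_neg at hcon
  have hle : S.card ≤ a + 1 := by omega
  have h1 : t * S.card ≤ t * (a+1) := Nat.mul_le_mul_left t hle
  have h2 : 1 + (a+1)*t ≤ t*(a+1) := le_trans hmain h1
  rw [mul_comm] at h2
  omega
end

section
/- Let t ≤ t' be positive integers and a ∈ ℕ. The subdiagram of S_{t,a} consisting of the first (a+1)·t chords in a star ordering is isomorphic (as a chord diagram, i.e., equivalent under an orientation-preserving relabeling of the cyclically ordered endpoints) to the subdiagram of S_{t',a} consisting of the first (a+1)·t chords in a star ordering. -/
/-- The set of endpoints of the chords in `Y`. -/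
def chordEndpoints {N : ℕ} (Y : Finset (Finset (ZMod N))) : Set (ZMod N) :=
  {p | ∃ c ∈ Y, p ∈ c}

/-- `Y` (a set of chords with endpoints among `ZMod M`) is isomorphic to `Z`:
there is a map of endpoints, injective and preserving the cyclic order on the
endpoints of `Y`, carrying the chords of `Y` exactly onto the chords of `Z`. -/
def DiagIso {M N : ℕ} (Y : Finset (Finset (ZMod M))) (Z : Finset (Finset (ZMod N))) : Prop :=
  ∃ φ : ZMod M → ZMod N,
    Set.InjOn φ (chordEndpoints Y) ∧
    (∀ a ∈ chordEndpoints Y, ∀ b ∈ chordEndpoints Y, ∀ c ∈ chordEndpoints Y,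
      (b - a).val < (c - a).val → (φ b - φ a).val < (φ c - φ a).val) ∧
    Y.image (Finset.image φ) = Z

/-- The first `n` chords of `S_{t,a}` in a star ordering: `c_0, c_{2t}, c_{4t}, ...`. -/
def starSub (t a n : ℕ) : Finset (Finset (ZMod (2 * (1 + (a + 1) * t)))) :=
  (Finset.range n).image (fun i => starChord t a (t * i))

namespace Stmt14Aux

def gfun (t t' v : ℕ) : ℕ := v + 2*(t'-t)*(((v+1)/2 + t - 1)/t)

lemma gfun_strictMono (t t' : ℕ) : StrictMono (gfun t t') := by
  intro v w h
  unfold gfun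
  have h1 : (v+1)/2 ≤ (w+1)/2 := Nat.div_le_div_right (by omega)
  have h2 : ((v+1)/2 + t - 1)/t ≤ ((w+1)/2 + t - 1)/t := Nat.div_le_div_right (by omega)
  have h3 := Nat.mul_le_mul_left (2*(t'-t)) h2
  exact add_lt_add_of_lt_of_le h h3

lemma gfun_zero (t t' : ℕ) (ht : 1 ≤ t) : gfun t t' 0 = 0 := by
  have h : ((0+1)/2 + t - 1)/t = 0 := Nat.div_eq_of_lt (by omega)
  unfold gfun
  rw [h, Nat.mul_zero]

lemma gfun_lt (a t t' : ℕ) (ht : 1 ≤ t) (htt' : t ≤ t') (v : ℕ) (hv : v ≤ 2*((a+1)*t)) :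
    gfun t t' v < 2*(1+(a+1)*t') := by
  have hk : (v+1)/2 ≤ (a+1)*t := by omega
  have hX : ((v+1)/2 + t - 1)/t ≤ a+1 := by
    have hb : (v+1)/2 + t - 1 < (a+2)*t := by
      have h : (a+2)*t = (a+1)*t + t := by ring
      omega
    have := (Nat.div_lt_iff_lt_mul (show 0 < t by omega)).2 hb
    omega
  have h3 := Nat.mul_le_mul_left (2*(t'-t)) hX
  have h4 : 2*(t'-t)*(a+1) + 2*((a+1)*t) = 2*((a+1)*t') := by
    zify [htt']
    ring
  unfold gfun
  omega

lemma gfun_slot_even (a t t' : ℕ) (ht : 1 ≤ t) (htt' : t ≤ t') (r s : ℕ)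
    (hr : 1 ≤ r) (hs : s + 1 ≤ t) :
    gfun t t' (2*(r*t - s)) = 2*(r*t' - s) := by
  have hrt : t ≤ r*t := Nat.le_mul_of_pos_left t hr
  have hrt' : t' ≤ r*t' := Nat.le_mul_of_pos_left t' hr
  have hk : (2*(r*t - s)+1)/2 = r*t - s := by omega
  have hd : (r*t - s + t - 1)/t = r := by
    have h1 : t*r = r*t := by ring
    have h2 : r*t - s + t - 1 = t*r + (t - 1 - s) := by omega
    rw [h2, Nat.mul_add_div (by omega)]
    have h3 : (t-1-s)/t = 0 := Nat.div_eq_of_lt (by omega)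
    omega
  unfold gfun
  rw [hk, hd]
  have h5 : s ≤ r*t := by omega
  have h6 : s ≤ r*t' := by omega
  zify [h5, h6, htt']
  ring

lemma gfun_slot_odd (a t t' : ℕ) (ht : 1 ≤ t) (htt' : t ≤ t') (r s : ℕ)
    (hr : 1 ≤ r) (hs : s + 1 ≤ t) :
    gfun t t' (2*(r*t - s) - 1) = 2*(r*t' - s) - 1 := by
  have hrt : t ≤ r*t := Nat.le_mul_of_pos_left t hr
  have hrt' : t' ≤ r*t' := Nat.le_mul_of_pos_left t' hr
  have hk : (2*(r*t - s) - 1 + 1)/2 = r*t - s := by omega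
  have hd : (r*t - s + t - 1)/t = r := by
    have h1 : t*r = r*t := by ring
    have h2 : r*t - s + t - 1 = t*r + (t - 1 - s) := by omega
    rw [h2, Nat.mul_add_div (by omega)]
    have h3 : (t-1-s)/t = 0 := Nat.div_eq_of_lt (by omega)
    omega
  unfold gfun
  rw [hk, hd]
  have h5 : s ≤ r*t := by omega
  have h6 : s ≤ r*t' := by omega
  have h7 : 1 ≤ 2*(r*t - s) := by omega
  have h8 : 1 ≤ 2*(r*t' - s) := by omega
  zify [h5, h6, h7, h8, htt']
  ring

lemma slots (a t : ℕ) (ht : 1 ≤ t) (i : ℕ) (h1 : 1 ≤ i) (h2 : i ≤ (a+1)*t) :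
    ∃ ρ σ, 1 ≤ ρ ∧ ρ ≤ a+1 ∧ σ + 1 ≤ t ∧
      ∀ T, t ≤ T → (T*i) % ((a+1)*T+1) = ρ*T - σ := by
  have hdm := Nat.div_add_mod i (a+1)
  have hrlt : i % (a+1) < a+1 := Nat.mod_lt _ (by omega)
  by_cases hr0 : i % (a+1) = 0
  · have hq1 : 1 ≤ i / (a+1) := by
      rcases Nat.eq_zero_or_pos (i/(a+1)) with h | h
      · rw [h, Nat.mul_zero] at hdm
        omega
      · exact h
    have hqt : i / (a+1) ≤ t := by
      have hh : (a+1)*(i/(a+1)) ≤ (a+1)*t := by omega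
      exact Nat.le_of_mul_le_mul_left hh (by omega)
    refine ⟨a+1, i/(a+1) - 1, by omega, le_refl _, by omega, ?_⟩
    intro T hT
    have hTa : T ≤ (a+1)*T := Nat.le_mul_of_pos_left T (by omega)
    have key : T*i = ((a+1)*T - (i/(a+1) - 1)) + ((a+1)*T+1)*(i/(a+1) - 1) := by
      have hi0 : i = (a+1)*(i/(a+1)) := by omega
      have hi' : (i:ℤ) = (a+1)*(i/(a+1)) := by exact_mod_cast hi0
      zify [show i/(a+1) - 1 ≤ (a+1)*T by omega, hq1]
      linear_combination (T:ℤ) * hi'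
    rw [key, Nat.add_mul_mod_self_left]
    exact Nat.mod_eq_of_lt (by omega)
  · have hqt : i/(a+1) + 1 ≤ t := by
      have h3 : (a+1)*(i/(a+1)) < (a+1)*t := by omega
      have := Nat.lt_of_mul_lt_mul_left h3
      omega
    refine ⟨i % (a+1), i/(a+1), by omega, by omega, hqt, ?_⟩
    intro T hT
    have hrT : T ≤ (i % (a+1))*T := Nat.le_mul_of_pos_left T (by omega)
    have hrT2 : (i % (a+1))*T ≤ (a+1)*T := Nat.mul_le_mul_right T (by omega)
    have key : T*i = ((i % (a+1))*T - i/(a+1)) + ((a+1)*T+1)*(i/(a+1)) := by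
      have hi' : (i:ℤ) = (a+1)*(i/(a+1)) + i % (a+1) := by exact_mod_cast hdm.symm
      zify [show i/(a+1) ≤ (i % (a+1))*T by omega]
      linear_combination (T:ℤ) * hi'
    rw [key, Nat.add_mul_mod_self_left]
    have hsub := Nat.sub_le ((i % (a+1))*T) (i/(a+1))
    exact Nat.mod_eq_of_lt (by omega)

lemma valL (a T i : ℕ) :
    ((2*(T*i) : ℕ) : ZMod (2*(1+(a+1)*T))).val = 2*((T*i) % ((a+1)*T+1)) := by
  haveI : NeZero (2*(1+(a+1)*T)) := ⟨by positivity⟩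
  rw [ZMod.val_natCast]
  have h : 2*(1+(a+1)*T) = 2*((a+1)*T+1) := by ring
  rw [h, Nat.mul_mod_mul_left]

lemma valR (a T i : ℕ) (hT : 1 ≤ T) (hu : 1 ≤ (T*(i+1)) % ((a+1)*T+1)) :
    ((2*(T*i) + (2*T - 1) : ℕ) : ZMod (2*(1+(a+1)*T))).val
      = 2*((T*(i+1)) % ((a+1)*T+1)) - 1 := by
  haveI : NeZero (2*(1+(a+1)*T)) := ⟨by positivity⟩
  rw [ZMod.val_natCast]
  have hdm := Nat.div_add_mod (T*(i+1)) ((a+1)*T+1)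
  have hlt : (T*(i+1)) % ((a+1)*T+1) < (a+1)*T+1 := Nat.mod_lt _ (by omega)
  have hr : T*(i+1) = T*i + T := by ring
  have h2 : (2*(1+(a+1)*T)) * ((T*(i+1))/((a+1)*T+1))
      = 2*(((a+1)*T+1) * ((T*(i+1))/((a+1)*T+1))) := by ring
  have key : 2*(T*i) + (2*T-1)
      = (2*((T*(i+1)) % ((a+1)*T+1)) - 1) + (2*(1+(a+1)*T)) * ((T*(i+1))/((a+1)*T+1)) := by
    omega
  rw [key, Nat.add_mul_mod_self_left]
  exact Nat.mod_eq_of_lt (by omega)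

lemma modhelp {N x y : ℕ} (hx : x < N) (hy : y < N) :
    (y + (N - x)) % N = if x ≤ y then y - x else y + N - x := by
  split
  · have h : y + (N - x) = (y - x) + N := by omega
    rw [h, Nat.add_mod_right]
    apply Nat.mod_eq_of_lt
    omega
  · have h : y + (N - x) = y + N - x := by omega
    rw [h]
    apply Nat.mod_eq_of_lt
    omega

lemma cyc {N N' v1 v2 v3 w1 w2 w3 : ℕ} (h1 : v1 < N) (h2 : v2 < N) (h3 : v3 < N)
    (g1 : w1 < N') (g2 : w2 < N') (g3 : w3 < N')
    (o12 : v1 < v2 ↔ w1 < w2) (o13 : v1 < v3 ↔ w1 < w3) (o23 : v2 < v3 ↔ w2 < w3)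
    (o21 : v2 < v1 ↔ w2 < w1) (o31 : v3 < v1 ↔ w3 < w1) (o32 : v3 < v2 ↔ w3 < w2)
    (h : (v2 + (N - v1)) % N < (v3 + (N - v1)) % N) :
    (w2 + (N' - w1)) % N' < (w3 + (N' - w1)) % N' := by
  rw [modhelp h1 h2, modhelp h1 h3] at h
  rw [modhelp g1 g2, modhelp g1 g3]
  split_ifs at h ⊢ <;> omega

lemma val_sub' {n : ℕ} [NeZero n] (x y : ZMod n) :
    (y - x).val = (y.val + (n - x.val)) % n := by
  have hx : x.val ≤ n := le_of_lt (ZMod.val_lt x)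
  have hxx : ((x.val : ℕ) : ZMod n) = x := ZMod.natCast_rightInverse x
  have hyy : ((y.val : ℕ) : ZMod n) = y := ZMod.natCast_rightInverse y
  have h1 : ((n - x.val : ℕ) : ZMod n) = -x := by
    rw [Nat.cast_sub hx, ZMod.natCast_self, zero_sub, hxx]
  have h2 : y - x = ((y.val + (n - x.val) : ℕ) : ZMod n) := by
    rw [Nat.cast_add, h1, hyy, sub_eq_add_neg]
  rw [h2, ZMod.val_natCast]

lemma keyL (a t t' : ℕ) (ht : 1 ≤ t) (htt' : t ≤ t') (i : ℕ) (hi : i < (a+1)*t) :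
    ((gfun t t' (((2*(t*i) : ℕ) : ZMod (2*(1+(a+1)*t))).val) : ℕ) : ZMod (2*(1+(a+1)*t')))
      = ((2*(t'*i) : ℕ) : ZMod (2*(1+(a+1)*t'))) := by
  haveI : NeZero (2*(1+(a+1)*t')) := ⟨by positivity⟩
  apply ZMod.val_injective
  rw [valL a t i]
  rcases Nat.eq_zero_or_pos i with h0 | h1
  · subst h0
    simp only [Nat.mul_zero, Nat.zero_mod, gfun_zero t t' ht]
  · obtain ⟨ρ, σ, hρ1, hρ2, hσ, hmod⟩ := slots a t ht i h1 (le_of_lt hi)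
    rw [hmod t le_rfl, gfun_slot_even a t t' ht htt' ρ σ hρ1 hσ, valL a t' i, hmod t' htt']
    have hb : ρ*t' ≤ (a+1)*t' := Nat.mul_le_mul_right t' hρ2
    rw [ZMod.val_cast_of_lt (by omega)]

lemma keyR (a t t' : ℕ) (ht : 1 ≤ t) (htt' : t ≤ t') (i : ℕ) (hi : i < (a+1)*t) :
    ((gfun t t' (((2*(t*i) + (2*t - 1) : ℕ) : ZMod (2*(1+(a+1)*t))).val) : ℕ)
        : ZMod (2*(1+(a+1)*t')))
      = ((2*(t'*i) + (2*t' - 1) : ℕ) : ZMod (2*(1+(a+1)*t'))) := by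
  haveI : NeZero (2*(1+(a+1)*t')) := ⟨by positivity⟩
  apply ZMod.val_injective
  obtain ⟨ρ, σ, hρ1, hρ2, hσ, hmod⟩ := slots a t ht (i+1) (by omega) (by omega)
  have hρt : t ≤ ρ*t := Nat.le_mul_of_pos_left t hρ1
  have hρt' : t' ≤ ρ*t' := Nat.le_mul_of_pos_left t' hρ1
  have hu : 1 ≤ (t*(i+1)) % ((a+1)*t+1) := by rw [hmod t le_rfl]; omega
  have hu' : 1 ≤ (t'*(i+1)) % ((a+1)*t'+1) := by rw [hmod t' htt']; omega
  rw [valR a t i ht hu, hmod t le_rfl,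
    gfun_slot_odd a t t' ht htt' ρ σ hρ1 hσ,
    valR a t' i (le_trans ht htt') hu', hmod t' htt']
  have hb : ρ*t' ≤ (a+1)*t' := Nat.mul_le_mul_right t' hρ2
  rw [ZMod.val_cast_of_lt (by omega)]

end Stmt14Aux

open Stmt14Aux in
lemma Stmt14Aux.endpoint_bound (a t : ℕ) (ht : 1 ≤ t) (x : ZMod (2*(1+(a+1)*t)))
    (hx : x ∈ chordEndpoints (starSub t a ((a+1)*t))) : x.val ≤ 2*((a+1)*t) := by
  obtain ⟨c, hc, hxc⟩ := hx
  simp only [starSub, Finset.mem_image, Finset.mem_range] at hc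
  obtain ⟨i, hi, rfl⟩ := hc
  simp only [starChord, Finset.mem_insert, Finset.mem_singleton] at hxc
  rcases hxc with rfl | rfl
  · rw [valL a t i]
    have hlt := Nat.mod_lt (t*i) (y := (a+1)*t+1) (by omega)
    omega
  · obtain ⟨ρ, σ, hρ1, hρ2, hσ, hmod⟩ := slots a t ht (i+1) (by omega) (by omega)
    have hρt : t ≤ ρ*t := Nat.le_mul_of_pos_left t hρ1
    have hu : 1 ≤ (t*(i+1)) % ((a+1)*t+1) := by rw [hmod t le_rfl]; omega
    have hlt2 : (t*(i+1)) % ((a+1)*t+1) < (a+1)*t+1 := Nat.mod_lt _ (by omega)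
    rw [valR a t i ht hu]
    omega

/-- For `1 ≤ t ≤ t'`, the subdiagram of `S_{t,a}` consisting of the first
`(a+1)t` chords in a star ordering is isomorphic to the subdiagram of `S_{t',a}`
consisting of its first `(a+1)t` chords in a star ordering. -/
theorem stmt_14 (a t t' : ℕ) (ht : 1 ≤ t) (htt' : t ≤ t') :
    DiagIso (starSub t a ((a + 1) * t)) (starSub t' a ((a + 1) * t)) := by
  haveI : NeZero (2*(1+(a+1)*t)) := ⟨by positivity⟩
  haveI : NeZero (2*(1+(a+1)*t')) := ⟨by positivity⟩
  refine ⟨fun p => ((Stmt14Aux.gfun t t' p.val : ℕ) : ZMod (2*(1+(a+1)*t'))), ?_, ?_, ?_⟩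
  · intro x hx y hy hxy
    have bx := Stmt14Aux.endpoint_bound a t ht x hx
    have bY := Stmt14Aux.endpoint_bound a t ht y hy
    have ex : ((Stmt14Aux.gfun t t' x.val : ℕ) : ZMod (2*(1+(a+1)*t'))).val = Stmt14Aux.gfun t t' x.val :=
      ZMod.val_cast_of_lt (Stmt14Aux.gfun_lt a t t' ht htt' _ bx)
    have ey : ((Stmt14Aux.gfun t t' y.val : ℕ) : ZMod (2*(1+(a+1)*t'))).val = Stmt14Aux.gfun t t' y.val :=
      ZMod.val_cast_of_lt (Stmt14Aux.gfun_lt a t t' ht htt' _ bY)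
    have hxy' : ((Stmt14Aux.gfun t t' x.val : ℕ) : ZMod (2*(1+(a+1)*t')))
        = ((Stmt14Aux.gfun t t' y.val : ℕ) : ZMod (2*(1+(a+1)*t'))) := hxy
    have h3 := congrArg ZMod.val hxy'
    rw [ex, ey] at h3
    exact ZMod.val_injective _ ((Stmt14Aux.gfun_strictMono t t').injective h3)
  · intro x hx y hy z hz hlt
    have bx := Stmt14Aux.endpoint_bound a t ht x hx
    have bY := Stmt14Aux.endpoint_bound a t ht y hy
    have bz := Stmt14Aux.endpoint_bound a t ht z hz
    have lx := Stmt14Aux.gfun_lt a t t' ht htt' _ bx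
    have ly := Stmt14Aux.gfun_lt a t t' ht htt' _ bY
    have lz := Stmt14Aux.gfun_lt a t t' ht htt' _ bz
    have ex : ((Stmt14Aux.gfun t t' x.val : ℕ) : ZMod (2*(1+(a+1)*t'))).val = Stmt14Aux.gfun t t' x.val :=
      ZMod.val_cast_of_lt lx
    have ey : ((Stmt14Aux.gfun t t' y.val : ℕ) : ZMod (2*(1+(a+1)*t'))).val = Stmt14Aux.gfun t t' y.val :=
      ZMod.val_cast_of_lt ly
    have ez : ((Stmt14Aux.gfun t t' z.val : ℕ) : ZMod (2*(1+(a+1)*t'))).val = Stmt14Aux.gfun t t' z.val :=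
      ZMod.val_cast_of_lt lz
    show (((Stmt14Aux.gfun t t' y.val : ℕ) : ZMod (2*(1+(a+1)*t')))
          - ((Stmt14Aux.gfun t t' x.val : ℕ) : ZMod (2*(1+(a+1)*t')))).val
        < (((Stmt14Aux.gfun t t' z.val : ℕ) : ZMod (2*(1+(a+1)*t')))
          - ((Stmt14Aux.gfun t t' x.val : ℕ) : ZMod (2*(1+(a+1)*t')))).val
    rw [Stmt14Aux.val_sub', Stmt14Aux.val_sub', ex, ey, ez]
    rw [Stmt14Aux.val_sub', Stmt14Aux.val_sub'] at hlt
    have mono := Stmt14Aux.gfun_strictMono t t'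
    exact Stmt14Aux.cyc (ZMod.val_lt x) (ZMod.val_lt y) (ZMod.val_lt z) lx ly lz
      mono.lt_iff_lt.symm mono.lt_iff_lt.symm mono.lt_iff_lt.symm
      mono.lt_iff_lt.symm mono.lt_iff_lt.symm mono.lt_iff_lt.symm
      hlt
  · rw [starSub, starSub, Finset.image_image]
    apply Finset.image_congr
    intro i hi
    simp only [Finset.mem_coe, Finset.mem_range] at hi
    simp only [Function.comp_apply, starChord, Finset.image_insert, Finset.image_singleton]
    rw [Stmt14Aux.keyL a t t' ht htt' i hi, Stmt14Aux.keyR a t t' ht htt' i hi]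
end
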